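/- arXiv:2311.02812 — 6 statements merged into one kernel-verified Lean document; each statement's English description precedes it below -/
import Mathlib

section
/- For every Hermitian matrix H ∈ GL_m(𝔽_{q²}) and every nonsquare ζ ∈ 𝔽_q^×, the discriminant of the 2m-dimensional 𝔽_q-quadratic form Q_H lies in the square class (−ζ)^m·(𝔽_q^×)²: for any 𝔽_q-basis e_1,…,e_{2m} of 𝔽_{q²}^m, the determinant of the Gram matrix (B(e_i,e_j))_{i,j}, where B(x,y) = (1/2)(Q_H(x+y) − Q_H(x) − Q_H(y)) is the polarization of Q_H, equals (−ζ)^m·c² for some c ∈ 𝔽_q^×. -/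
/-!
Let `σ` be the Frobenius of `𝔽_{q²}/𝔽_q` and `h(x, y) = ∑ σ(xⱼ) Hⱼₖ yₖ`, so that `Q_H(x) = h(x, x)`.
Hermitian symmetry gives `h(y, x) = σ(h(x, y))`, hence `2B = Tr ∘ h` with `Tr` the trace of
`𝔽_{q²}/𝔽_q`. Every element of `𝔽_q` is a square in `𝔽_{q²}`, say `ζ = θ²`; as `ζ` is not a square
in `𝔽_q`, `θ ∉ 𝔽_q` and `σ θ = -θ`, and `(eⱼ)ⱼ ∪ (θ eⱼ)ⱼ` is an `𝔽_q`-basis of `𝔽_{q²}^m`. Over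
`𝔽_{q²}` the Gram matrix of `Tr ∘ h` in this basis is the block matrix
`[[1, 1], [θ, -θ]] · diag(Hᵀ, H) · [[1, -θ], [1, θ]]`, of determinant `(-4ζ)^m (det H)²`, and
`det H ∈ 𝔽_q^×` because it is fixed by `σ`. Changing the basis multiplies the Gram determinant by
a nonzero square.
-/

open FiniteField Matrix
open LinearMap (BilinForm)

theorem Module.finrank_eq_two_of_card_eq_sq {F K : Type*} [Field F] [Fintype F] [AddCommGroup K]
    [Module F K] [Fintype K] (h : Fintype.card K = Fintype.card F ^ 2) : Module.finrank F K = 2 :=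
  Nat.pow_right_injective Fintype.one_lt_card (Module.card_eq_pow_finrank.symm.trans h)

theorem RingHom.map_det_eq_of_transpose_map_eq {R n : Type*} [CommRing R] [Fintype n]
    [DecidableEq n] (f : R →+* R) {H : Matrix n n R} (hH : (H.map f)ᵀ = H) :
    f H.det = H.det := by
  rw [f.map_det, RingHom.mapMatrix_apply, ← det_transpose, hH]

theorem Matrix.det_fromBlocks_add_smul_sub {R n : Type*} [CommRing R] [Fintype n] [DecidableEq n]
    (A A' : Matrix n n R) (θ : R) :
    (fromBlocks (A' + A) (θ • (A - A')) (θ • (A' - A)) (-(θ * θ) • (A' + A))).det =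
      (-(4 * θ * θ)) ^ Fintype.card n * A.det * A'.det := by
  have hfactor : fromBlocks (A' + A) (θ • (A - A')) (θ • (A' - A)) (-(θ * θ) • (A' + A)) =
      fromBlocks 1 1 (θ • 1) (-θ • 1) * fromBlocks A' 0 0 A *
        fromBlocks 1 (-θ • 1) 1 (θ • 1) := by
    simp only [fromBlocks_multiply, Matrix.one_mul, Matrix.mul_one, Matrix.mul_zero,
      add_zero, zero_add, smul_mul, Matrix.mul_smul]
    congr 1 <;> module
  rw [hfactor, det_mul, det_mul, det_fromBlocks_one₁₁, det_fromBlocks_one₁₁,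
    det_fromBlocks_zero₁₂, Matrix.mul_one, Matrix.one_mul, ← sub_smul, ← sub_smul,
    det_smul, det_smul, det_one, mul_one, mul_one, mul_right_comm, ← mul_pow]
  ring

theorem LinearMap.BilinForm.exists_det_toMatrix_eq_sq_mul {R M ι ι' : Type*} [CommRing R]
    [Nontrivial R] [AddCommGroup M] [Module R M] [Fintype ι] [DecidableEq ι] [Fintype ι']
    [DecidableEq ι'] (B : BilinForm R M) (b : Module.Basis ι R M)
    (c : Module.Basis ι' R M) :
    ∃ u : R, IsUnit u ∧ (toMatrix c B).det = u ^ 2 * (toMatrix b B).det := by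
  set b' := b.reindex (b.indexEquiv c)
  have hb' : toMatrix b' B = reindex (b.indexEquiv c) (b.indexEquiv c) (toMatrix b B) := by
    ext i j
    simp [b', toMatrix_apply]
  refine ⟨(b'.toMatrix c).det, isUnit_det_of_left_inverse (c.toMatrix_mul_toMatrix_flip b'), ?_⟩
  rw [← toMatrix_mul_basis_toMatrix b' c, det_mul, det_mul, det_transpose, hb', det_reindex_self]
  ring

theorem exists_basis_sum_single (n : Type*) [Finite n] [DecidableEq n] {F K : Type*} [Field F]
    [Field K] [Algebra F K] (hK : Module.finrank F K = 2) {θ : K}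
    (hθ : ∀ a, algebraMap F K a ≠ θ) :
    ∃ b : Module.Basis (n ⊕ n) F (n → K),
      ∀ i, b (Sum.inl i) = Pi.single i 1 ∧ b (Sum.inr i) = Pi.single i θ := by
  have hli : LinearIndependent F ![1, θ] := (LinearIndependent.pair_iff' one_ne_zero).mpr
    fun a ha => hθ a (by rwa [Algebra.algebraMap_eq_smul_one])
  let bK := basisOfLinearIndependentOfCardEqFinrank hli (by simp [hK])
  refine ⟨(bK.smulTower (Pi.basisFun K n)).reindex
      ((finTwoEquiv.prodCongr (Equiv.refl n)).trans (Equiv.boolProdEquivSum n)),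
    fun i => ⟨?_, ?_⟩⟩ <;>
  simp [bK, ← Pi.single_smul', Equiv.boolProdEquivSum, finTwoEquiv]

section QuadraticExtension

variable {F K : Type*} [Field F] [Fintype F] [Field K] [Finite K] [Algebra F K]

local notation "σ" => frobeniusAlgEquivOfAlgebraic F K

theorem frobeniusAlgEquivOfAlgebraic_apply_apply (hK : Module.finrank F K = 2) (z : K) :
    σ (σ z) = z := by
  have h := pow_orderOf_eq_one σ
  rw [orderOf_frobeniusAlgEquivOfAlgebraic, hK, sq] at h
  exact DFunLike.congr_fun h z

theorem algebraMap_trace_eq_add_frobenius (hK : Module.finrank F K = 2) (z : K) :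
    algebraMap F K (Algebra.trace F K z) = z + σ z := by
  simp [algebraMap_trace_eq_sum_pow, hK, Finset.sum_range_succ, Nat.card_eq_fintype_card]

theorem exists_algebraMap_eq_of_frobenius_eq (hK : Module.finrank F K = 2)
    (hF : ringChar F ≠ 2) {z : K} (hz : σ z = z) :
    ∃ a : F, algebraMap F K a = z := by
  refine ⟨2⁻¹ * Algebra.trace F K z, ?_⟩
  have h2 : algebraMap F K 2 ≠ 0 := by simpa using Ring.two_ne_zero hF
  rw [map_mul, map_inv₀, algebraMap_trace_eq_add_frobenius hK, hz, inv_mul_eq_iff_eq_mul₀ h2,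
    map_ofNat, two_mul]

theorem isSquare_algebraMap (hK : Module.finrank F K = 2) (hF : ringChar F ≠ 2) (a : F) :
    IsSquare (algebraMap F K a) := by
  rcases eq_or_ne a 0 with rfl | ha
  · exact ⟨0, by simp⟩
  have := Fintype.ofFinite K
  rw [isSquare_iff (by rwa [← Algebra.ringChar_eq F K]) (by simpa using ha),
    Module.card_eq_pow_finrank (K := F), hK]
  obtain ⟨t, ht⟩ := Nat.odd_iff.mpr (odd_card_of_char_ne_two hF)
  have hexp : Fintype.card F ^ 2 / 2 = (Fintype.card F - 1) * (t + 1) := by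
    rw [ht, Nat.add_sub_cancel, show (2 * t + 1) ^ 2 = 2 * (2 * t * (t + 1)) + 1 by ring,
      Nat.mul_add_div two_pos]
    ring
  rw [hexp, pow_mul, ← map_pow, pow_card_sub_one_eq_one a ha, map_one, one_pow]

theorem frobenius_eq_neg_of_algebraMap_eq_mul_self (hK : Module.finrank F K = 2)
    (hF : ringChar F ≠ 2) {θ : K} (hθF : ∀ a, algebraMap F K a ≠ θ) {ζ : F}
    (hθ : algebraMap F K ζ = θ * θ) : σ θ = -θ := by
  have hsq : σ θ * σ θ = θ * θ := by rw [← map_mul, ← hθ, AlgEquiv.commutes]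
  obtain hfix | hneg := mul_self_eq_mul_self_iff.mp hsq
  · obtain ⟨a, ha⟩ := exists_algebraMap_eq_of_frobenius_eq hK hF hfix
    exact absurd ha (hθF a)
  · exact hneg

end QuadraticExtension

section HermitianForm

variable {F K : Type*} [Field F] [Fintype F] [Field K] [Finite K] [Algebra F K]
  {n : Type*} [Fintype n]

local notation "σ" => frobeniusAlgEquivOfAlgebraic F K

variable (F) in
noncomputable def frobeniusSesqForm (H : Matrix n n K) :
    (n → K) →ₗ[F] (n → K) →ₗ[F] K :=
  LinearMap.mk₂ F (fun x y => ∑ j, ∑ k, σ (x j) * H j k * y k)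
    (fun x x' y => by simp only [Pi.add_apply, map_add, add_mul, Finset.sum_add_distrib])
    (fun c x y => by simp only [Pi.smul_apply, map_smul, Finset.smul_sum, smul_mul_assoc])
    (fun x y y' => by simp only [Pi.add_apply, mul_add, Finset.sum_add_distrib])
    (fun c x y => by simp only [Pi.smul_apply, mul_smul_comm, Finset.smul_sum])

@[simp]
theorem frobeniusSesqForm_apply (H : Matrix n n K) (x y : n → K) :
    frobeniusSesqForm F H x y = ∑ j, ∑ k, σ (x j) * H j k * y k :=
  rfl

theorem frobeniusSesqForm_single [DecidableEq n] (H : Matrix n n K) (i j : n) (α β : K) :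
    frobeniusSesqForm F H (Pi.single i α) (Pi.single j β) = σ α * H i j * β := by
  simp [Pi.single_apply]

theorem frobeniusSesqForm_swap (hK : Module.finrank F K = 2) {H : Matrix n n K}
    (hH : (H.map σ)ᵀ = H) (x y : n → K) :
    frobeniusSesqForm F H y x = σ (frobeniusSesqForm F H x y) := by
  have hHji : ∀ j k, σ (H j k) = H k j := fun j k => congrFun (congrFun hH k) j
  simp only [frobeniusSesqForm_apply, map_sum, map_mul, hHji,
    frobeniusAlgEquivOfAlgebraic_apply_apply hK]
  rw [Finset.sum_comm]
  exact Finset.sum_congr rfl fun k _ => Finset.sum_congr rfl fun j _ => by ring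

variable (F) in
noncomputable def hermitianTraceForm (H : Matrix n n K) : BilinForm F (n → K) :=
  (frobeniusSesqForm F H).compr₂ (Algebra.trace F K)

theorem algebraMap_hermitianTraceForm (hK : Module.finrank F K = 2) {H : Matrix n n K}
    (hH : (H.map σ)ᵀ = H) (x y : n → K) :
    algebraMap F K (hermitianTraceForm F H x y) =
      frobeniusSesqForm F H x y + frobeniusSesqForm F H y x := by
  rw [hermitianTraceForm, LinearMap.compr₂_apply, algebraMap_trace_eq_add_frobenius hK,
    frobeniusSesqForm_swap hK hH x y]

theorem eq_inv_two_mul_hermitianTraceForm (hK : Module.finrank F K = 2) (hF : ringChar F ≠ 2)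
    {H : Matrix n n K} (hH : (H.map σ)ᵀ = H) {B : (n → K) → (n → K) → F}
    (hB : ∀ x y, 2 * algebraMap F K (B x y) = frobeniusSesqForm F H (x + y) (x + y) -
      frobeniusSesqForm F H x x - frobeniusSesqForm F H y y) (x y : n → K) :
    B x y = 2⁻¹ * hermitianTraceForm F H x y := by
  rw [eq_inv_mul_iff_mul_eq₀ (Ring.two_ne_zero hF)]
  apply (algebraMap F K).injective
  rw [map_mul, map_ofNat, hB, algebraMap_hermitianTraceForm hK hH]
  simp only [map_add, LinearMap.add_apply]
  ring

theorem toMatrix_hermitianTraceForm [DecidableEq n] (hK : Module.finrank F K = 2)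
    {H : Matrix n n K} (hH : (H.map σ)ᵀ = H) {θ : K} (hθ : σ θ = -θ)
    {b : Module.Basis (n ⊕ n) F (n → K)}
    (hb : ∀ i, b (Sum.inl i) = Pi.single i 1 ∧ b (Sum.inr i) = Pi.single i θ) :
    (LinearMap.BilinForm.toMatrix b (hermitianTraceForm F H)).map (algebraMap F K) =
      fromBlocks (Hᵀ + H) (θ • (H - Hᵀ)) (θ • (Hᵀ - H)) (-(θ * θ) • (Hᵀ + H)) := by
  ext (i | i) (j | j) <;>
    simp only [map_apply, LinearMap.BilinForm.toMatrix_apply, hb,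
      algebraMap_hermitianTraceForm hK hH, frobeniusSesqForm_single, hθ, map_one,
      fromBlocks_apply₁₁, fromBlocks_apply₁₂, fromBlocks_apply₂₁, fromBlocks_apply₂₂,
      Matrix.add_apply, Matrix.sub_apply, Matrix.smul_apply, transpose_apply, smul_eq_mul] <;>
    ring

theorem algebraMap_det_toMatrix_hermitianTraceForm [DecidableEq n] (hK : Module.finrank F K = 2)
    {H : Matrix n n K} (hH : (H.map σ)ᵀ = H) {θ : K} (hθ : σ θ = -θ)
    {b : Module.Basis (n ⊕ n) F (n → K)}
    (hb : ∀ i, b (Sum.inl i) = Pi.single i 1 ∧ b (Sum.inr i) = Pi.single i θ) :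
    algebraMap F K (LinearMap.BilinForm.toMatrix b (hermitianTraceForm F H)).det =
      (-(4 * θ * θ)) ^ Fintype.card n * H.det ^ 2 := by
  rw [RingHom.map_det, RingHom.mapMatrix_apply, toMatrix_hermitianTraceForm hK hH hθ hb,
    det_fromBlocks_add_smul_sub, det_transpose, sq, mul_assoc]

theorem exists_det_toMatrix_hermitianTraceForm [DecidableEq n] (hK : Module.finrank F K = 2)
    (hF : ringChar F ≠ 2) {H : Matrix n n K} (hH : IsUnit H) (hHerm : (H.map σ)ᵀ = H)
    {ζ : F} (hζ : ¬IsSquare ζ)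
    {ι : Type*} [Fintype ι] [DecidableEq ι] (b : Module.Basis ι F (n → K)) :
    ∃ c : F, c ≠ 0 ∧ (LinearMap.BilinForm.toMatrix b (hermitianTraceForm F H)).det =
      (-(4 * ζ)) ^ Fintype.card n * c ^ 2 := by
  obtain ⟨θ, hθ⟩ := isSquare_algebraMap hK hF ζ
  have hθF : ∀ a, algebraMap F K a ≠ θ := by
    rintro a rfl
    exact hζ ⟨a, (algebraMap F K).injective (by rw [hθ, map_mul])⟩
  obtain ⟨b₀, hb₀⟩ := exists_basis_sum_single n hK hθF
  obtain ⟨d, hd⟩ := exists_algebraMap_eq_of_frobenius_eq hK hF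
    (RingHom.map_det_eq_of_transpose_map_eq (σ : K →+* K) hHerm)
  obtain ⟨u, hu, hchange⟩ := (hermitianTraceForm F H).exists_det_toMatrix_eq_sq_mul b₀ b
  refine ⟨u * d, mul_ne_zero hu.ne_zero ?_, (algebraMap F K).injective ?_⟩
  · rintro rfl
    exact ((isUnit_iff_isUnit_det H).mp hH).ne_zero (by rw [← hd, map_zero])
  · rw [hchange, map_mul, map_pow, algebraMap_det_toMatrix_hermitianTraceForm hK hHerm
      (frobenius_eq_neg_of_algebraMap_eq_mul_self hK hF hθF hθ) hb₀, ← hd]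
    simp only [map_mul, map_pow, map_neg, map_ofNat, hθ]
    ring

end HermitianForm

/-- For every Hermitian matrix `H ∈ GL_m(𝔽_{q²})` and every nonsquare
`ζ ∈ 𝔽_q^×`, the discriminant of the `2m`-dimensional `𝔽_q`-quadratic form
`Q_H(x) = σ(x)ᵀ H x` lies in the square class `(−ζ)^m·(𝔽_q^×)²`: for any `𝔽_q`-basis
`e₁,…,e_{2m}` of `𝔽_{q²}^m`, the Gram determinant of the polarization
`B(x,y) = (1/2)(Q_H(x+y) − Q_H(x) − Q_H(y))` equals `(−ζ)^m·c²` for some `c ∈ 𝔽_q^×`. -/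
theorem discriminant_hermitian_form_square_class
    (F K : Type) [Field F] [Fintype F] [Field K] [Fintype K] [Algebra F K]
    (hodd : Odd (Fintype.card F))
    (hcard : Fintype.card K = Fintype.card F ^ 2)
    (m : ℕ)
    (H : Matrix (Fin m) (Fin m) K) (hH : IsUnit H)
    (hHerm : (H.map fun a => a ^ Fintype.card F)ᵀ = H)
    (ζ : F) (hζ : ¬ IsSquare ζ)
    (B : (Fin m → K) → (Fin m → K) → F)
    (hB : ∀ x y : Fin m → K,
      2 * algebraMap F K (B x y) =
        (∑ j : Fin m, ∑ k : Fin m, ((x + y) j) ^ Fintype.card F * H j k * (x + y) k)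
        - (∑ j : Fin m, ∑ k : Fin m, (x j) ^ Fintype.card F * H j k * x k)
        - (∑ j : Fin m, ∑ k : Fin m, (y j) ^ Fintype.card F * H j k * y k))
    (b : Module.Basis (Fin (2 * m)) F (Fin m → K)) :
    ∃ c : F, c ≠ 0 ∧
      (Matrix.of fun i j => B (b i) (b j)).det = (-ζ) ^ m * c ^ 2 := by
  have hF : ringChar F ≠ 2 := fun h => by
    have := even_card_iff_char_two.mp h
    rw [Nat.odd_iff] at hodd
    omega
  have hK := Module.finrank_eq_two_of_card_eq_sq hcard
  have hBT : Matrix.of (fun i j => B (b i) (b j)) =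
      (2 : F)⁻¹ • LinearMap.BilinForm.toMatrix b (hermitianTraceForm F H) := by
    ext i j
    rw [of_apply, Matrix.smul_apply, LinearMap.BilinForm.toMatrix_apply, smul_eq_mul]
    exact eq_inv_two_mul_hermitianTraceForm hK hF hHerm hB (b i) (b j)
  obtain ⟨c, hc, hdet⟩ := exists_det_toMatrix_hermitianTraceForm hK hF hH hHerm hζ b
  refine ⟨c, hc, ?_⟩
  have hscale : (2 : F)⁻¹ ^ (2 * m) * (-(4 * ζ)) ^ m = (-ζ) ^ m := by
    rw [pow_mul, ← mul_pow]
    congr 1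
    field_simp [Ring.two_ne_zero hF]
    ring
  rw [hBT, det_smul, hdet, Fintype.card_fin, Fintype.card_fin, ← mul_assoc, hscale]
end

section
/- The pairing h_n is a symmetric bilinear form on K^{2n}; its radical is exactly the line K·(1,1,…,1); and the induced nondegenerate symmetric bilinear form on the quotient K^{2n}/K·(1,…,1) has discriminant 2^{2n−1}(−1)^n modulo squares, i.e. for any basis of the quotient the Gram determinant of the induced form equals 2^{2n−1}(−1)^n·c² for some c ∈ K^×. -/
open Finset

/-- Extract the `k`-th coordinate (with 1-based subscripts `1 ≤ k ≤ N`) of a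
vector `x ∈ K^N`, returning `0` for out-of-range subscripts. -/
def coordFn {K : Type*} [Zero K] (N : ℕ) (x : Fin N → K) (k : ℕ) : K :=
  if hk : 1 ≤ k ∧ k ≤ N then x ⟨k - 1, by omega⟩ else 0

/-- The symmetric bilinear form `h_n` on `K^{2n}` attached to the affine generic
stratum of a ramified even special orthogonal group `SO_{2n}`:
`h_n(x,y) = (1/2)[(x_n − x_{2n})y_1 + (x_1 − x_n)y_n + (x_{n+2} − x_{n+1})y_{n+1}
 + (x_{n+1} − x_{n−1})y_{n+2} + Σ_{i=2}^{n−1}(x_{2n+2−i} − x_{2n+1−i})y_i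
 + Σ_{i=n+3}^{2n}(x_{2n+2−i} − x_{2n+1−i})y_i]`. -/
def hSO {K : Type*} [Field K] (n : ℕ) (x y : Fin (2 * n) → K) : K :=
  let X := coordFn (2 * n) x
  let Y := coordFn (2 * n) y
  (2 : K)⁻¹ *
    ((X n - X (2 * n)) * Y 1 + (X 1 - X n) * Y n
      + (X (n + 2) - X (n + 1)) * Y (n + 1) + (X (n + 1) - X (n - 1)) * Y (n + 2)
      + ∑ i ∈ Finset.Icc 2 (n - 1), (X (2 * n + 2 - i) - X (2 * n + 1 - i)) * Y i
      + ∑ i ∈ Finset.Icc (n + 3) (2 * n), (X (2 * n + 2 - i) - X (2 * n + 1 - i)) * Y i)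

/-- The line `K·(1,…,1)` in `K^N`. -/
def allOnesLine (K : Type*) [Field K] (N : ℕ) : Submodule K (Fin N → K) :=
  Submodule.span K {fun _ => (1 : K)}

/-! Read the coordinates along the path `p = (n, 1, 2n, 2, 2n-1, 3, …, n-1, n+2, n+1)`. Summation by
parts turns `h_n` into `½ ∑_{k < 2n-1} (-1)^(k+1) (x_{p k} - x_{p (k+1)}) (y_{p k} - y_{p (k+1)})`: the
pullback of the diagonal form `diag((-1)^(k+1)/2)` along the difference map `D : K^{2n} → K^{2n-1}`.
Since `p` visits every coordinate, `ker D` is the line of constant vectors, so `D` is onto by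
rank-nullity and the radical of `h_n` is `ker D`. For `b` inducing a basis of the quotient, the Gram
matrix is `A · diag((-1)^(k+1)/2) · Aᵀ` with `A = (D b_i)_k` invertible, of determinant
`(det A)² (-1)^n / 2^(2n-1) = 2^(2n-1) (-1)^n (det A / 2^(2n-1))²`. -/

section DiagForm

variable {R V ι : Type*} [CommRing R] [AddCommGroup V] [Module R V] [Fintype ι]

def diagForm (L : V →ₗ[R] ι → R) (d : ι → R) (x y : V) : R :=
  ∑ i, d i * L x i * L y i

variable (L : V →ₗ[R] ι → R) (d : ι → R)

theorem diagForm_comm (x y : V) : diagForm L d x y = diagForm L d y x :=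
  Finset.sum_congr rfl fun _ _ => by ring

theorem diagForm_smul_add_left (a : R) (x x' y : V) :
    diagForm L d (a • x + x') y = a * diagForm L d x y + diagForm L d x' y := by
  simp only [diagForm, map_add, map_smul, Pi.add_apply, Pi.smul_apply, smul_eq_mul, mul_sum,
    ← sum_add_distrib]
  exact Finset.sum_congr rfl fun _ _ => by ring

theorem diagForm_smul_add_right (a : R) (x y y' : V) :
    diagForm L d x (a • y + y') = a * diagForm L d x y + diagForm L d x y' := by
  simp only [diagForm_comm L d x, diagForm_smul_add_left]

theorem det_diagForm [DecidableEq ι] (b : ι → V) :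
    (Matrix.of fun i j => diagForm L d (b i) (b j)).det
      = (Matrix.of fun i k => L (b i) k).det ^ 2 * ∏ k, d k := by
  set A := Matrix.of fun i k => L (b i) k
  have : (Matrix.of fun i j => diagForm L d (b i) (b j)) = A * Matrix.diagonal d * A.transpose := by
    ext i j
    simp only [diagForm, Matrix.of_apply, Matrix.mul_apply, Matrix.diagonal_apply, mul_ite,
      mul_zero, sum_ite_eq', mem_univ, ↓reduceIte, Matrix.transpose_apply, A]
    exact sum_congr rfl fun _ _ => by ring
  rw [this, Matrix.det_mul, Matrix.det_mul, Matrix.det_transpose, Matrix.det_diagonal]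
  ring

end DiagForm

section DiagFormField

variable {K V ι : Type*} [Field K] [AddCommGroup V] [Module K V] [Fintype ι]
  (L : V →ₗ[K] ι → K)

theorem det_ne_zero_of_linearIndependent_mkQ_ker [DecidableEq ι] {b : ι → V}
    (hb : LinearIndependent K fun i => (LinearMap.ker L).mkQ (b i)) :
    (Matrix.of fun i k => L (b i) k).det ≠ 0 := by
  have : LinearIndependent K fun i => L (b i) :=
    hb.map' _ (Submodule.ker_liftQ_eq_bot' _ L rfl)
  exact (Matrix.isUnit_iff_isUnit_det _).mp (Matrix.linearIndependent_rows_iff_isUnit.mp this)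
    |>.ne_zero

end DiagFormField

section DiagFormDomain

variable {R V ι : Type*} [CommRing R] [NoZeroDivisors R] [AddCommGroup V] [Module R V]
  [Fintype ι] (L : V →ₗ[R] ι → R) (d : ι → R)

theorem forall_diagForm_eq_zero_iff (hL : Function.Surjective L) (hd : ∀ i, d i ≠ 0) (x : V) :
    (∀ y, diagForm L d x y = 0) ↔ L x = 0 := by
  classical
  refine ⟨fun hx => funext fun i => ?_, fun hx y => by simp [diagForm, hx]⟩
  obtain ⟨y, hy⟩ := hL (Pi.single i 1)
  have := hx y
  simp only [diagForm, hy, Pi.single_apply, mul_ite, mul_one, mul_zero, sum_ite_eq', mem_univ,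
    if_true] at this
  exact (mul_eq_zero.mp this).resolve_left (hd i)

end DiagFormDomain

theorem sum_range_neg_one_pow_mul_sub_mul_sub {R : Type*} [CommRing R] (f g : ℕ → R) (N : ℕ) :
    ∑ k ∈ range (2 * N + 1), (-1) ^ (k + 1) * (f k - f (k + 1)) * (g k - g (k + 1))
      = (f 1 - f 0) * g 0
        + ∑ j ∈ range N, ((f (2 * j) - f (2 * j + 2)) * g (2 * j + 1)
          + (f (2 * j + 3) - f (2 * j + 1)) * g (2 * j + 2))
        + (f (2 * N) - f (2 * N + 1)) * g (2 * N + 1) := by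
  induction N with
  | zero =>
    simp only [mul_zero, zero_add, range_one, sum_singleton, pow_one, neg_mul, one_mul, neg_sub,
      range_zero, sum_empty, add_zero]
    ring
  | succ N ih =>
    rw [show 2 * (N + 1) + 1 = 2 * N + 1 + 1 + 1 by ring, sum_range_succ, sum_range_succ, ih,
      sum_range_succ]
    have h2N : (-1 : R) ^ (2 * N) = 1 := by rw [pow_mul]; simp
    simp only [pow_succ, h2N]
    ring_nf

theorem prod_range_neg_one_pow_succ {R : Type*} [CommMonoid R] [HasDistribNeg R] (n : ℕ) :
    ∏ k ∈ range (2 * n + 1), (-1 : R) ^ (k + 1) = (-1) ^ (n + 1) := by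
  induction n with
  | zero => simp
  | succ n ih =>
    rw [show 2 * (n + 1) + 1 = 2 * n + 1 + 1 + 1 by ring, prod_range_succ, prod_range_succ, ih]
    simp [pow_succ]

def hSOPath (n k : ℕ) : ℕ :=
  if k = 0 then n else if k = 2 * n - 1 then n + 1
  else if k % 2 = 1 then (k + 1) / 2 else 2 * n + 1 - k / 2

section hSOPath

variable {n : ℕ}

theorem hSOPath_zero : hSOPath n 0 = n := by
  simp [hSOPath]

theorem hSOPath_two_mul_add_one {j : ℕ} (hj : j + 2 ≤ n) : hSOPath n (2 * j + 1) = j + 1 := by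
  unfold hSOPath; repeat' split
  all_goals omega

theorem hSOPath_two_mul_add_two (j : ℕ) : hSOPath n (2 * j + 2) = 2 * n - j := by
  unfold hSOPath; repeat' split
  all_goals omega

theorem hSOPath_two_mul_sub_one (hn : 1 ≤ n) : hSOPath n (2 * n - 1) = n + 1 := by
  unfold hSOPath; repeat' split
  all_goals omega

theorem hSOPath_mem {k : ℕ} (hk : k < 2 * n) : 1 ≤ hSOPath n k ∧ hSOPath n k ≤ 2 * n := by
  unfold hSOPath; repeat' split
  all_goals omega

theorem exists_hSOPath_eq {i : ℕ} (h1 : 1 ≤ i) (h2 : i ≤ 2 * n) :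
    ∃ k < 2 * n, hSOPath n k = i := by
  obtain hi | rfl | rfl | hi : i < n ∨ i = n ∨ i = n + 1 ∨ n + 2 ≤ i := by omega
  · exact ⟨2 * (i - 1) + 1, by omega, by rw [hSOPath_two_mul_add_one (by omega)]; omega⟩
  · exact ⟨0, by omega, hSOPath_zero⟩
  · exact ⟨2 * n - 1, by omega, hSOPath_two_mul_sub_one (by omega)⟩
  · exact ⟨2 * (2 * n - i) + 2, by omega, by rw [hSOPath_two_mul_add_two]; omega⟩

end hSOPath

theorem coordFn_add_one {K : Type*} [Zero K] {N : ℕ} (x : Fin N → K) (i : Fin N) :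
    coordFn N x (i + 1) = x i := by
  simp [coordFn]

def coordFnLinear (K : Type*) [Semiring K] (N k : ℕ) : (Fin N → K) →ₗ[K] K where
  toFun x := coordFn N x k
  map_add' x y := by unfold coordFn; split_ifs <;> simp
  map_smul' a x := by unfold coordFn; split_ifs <;> simp

def hSODiff (K : Type*) [Field K] (n : ℕ) : (Fin (2 * n) → K) →ₗ[K] Fin (2 * n - 1) → K :=
  LinearMap.pi fun k =>
    coordFnLinear K (2 * n) (hSOPath n k) - coordFnLinear K (2 * n) (hSOPath n (k + 1))

theorem hSODiff_apply {K : Type*} [Field K] {n : ℕ} (x : Fin (2 * n) → K) (k : Fin (2 * n - 1)) :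
    hSODiff K n x k = coordFn (2 * n) x (hSOPath n k) - coordFn (2 * n) x (hSOPath n (k + 1)) :=
  rfl

def hSOWeight (K : Type*) [Field K] (m : ℕ) : Fin m → K := fun k => (-1) ^ (k.val + 1) / 2

theorem hSO_eq_diagForm {K : Type*} [Field K] {n : ℕ} (hn : 2 ≤ n) (x y : Fin (2 * n) → K) :
    hSO n x y = diagForm (hSODiff K n) (hSOWeight K _) x y := by
  set f := fun k => coordFn (2 * n) x (hSOPath n k)
  set g := fun k => coordFn (2 * n) y (hSOPath n k)
  have hdiag : diagForm (hSODiff K n) (hSOWeight K _) x y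
      = (∑ k ∈ range (2 * n - 1), (-1) ^ (k + 1) * (f k - f (k + 1)) * (g k - g (k + 1))) / 2 := by
    simp only [diagForm, hSODiff_apply, hSOWeight, div_mul_eq_mul_div, ← sum_div]
    rw [Fin.sum_univ_eq_sum_range (fun k => (-1) ^ (k + 1) * (f k - f (k + 1)) * (g k - g (k + 1)))]
  obtain ⟨m, rfl⟩ : ∃ m, n = m + 2 := ⟨n - 2, by omega⟩
  set X := coordFn (2 * (m + 2)) x
  set Y := coordFn (2 * (m + 2)) y
  have hEven : ∑ j ∈ range m, (f (2 * (j + 1)) - f (2 * (j + 1) + 2)) * g (2 * (j + 1) + 1)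
      = ∑ i ∈ Icc 2 (m + 2 - 1), (X (2 * (m + 2) + 2 - i) - X (2 * (m + 2) + 1 - i)) * Y i := by
    refine sum_nbij' (· + 2) (· - 2) ?_ ?_ ?_ ?_ fun j hj => ?_
    all_goals simp only [mem_range, mem_Icc] at *
    all_goals try (intros; omega)
    congr 3 <;> grind [hSOPath]
  have hOdd : ∑ j ∈ range m, (f (2 * j + 3) - f (2 * j + 1)) * g (2 * j + 2)
      = ∑ i ∈ Icc (m + 2 + 3) (2 * (m + 2)),
          (X (2 * (m + 2) + 2 - i) - X (2 * (m + 2) + 1 - i)) * Y i := by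
    refine sum_nbij' (2 * (m + 2) - ·) (2 * (m + 2) - ·) ?_ ?_ ?_ ?_ fun j hj => ?_
    all_goals simp only [mem_range, mem_Icc] at *
    all_goals try (intros; omega)
    congr 3 <;> grind [hSOPath]
  rw [hdiag, show 2 * (m + 2) - 1 = 2 * (m + 1) + 1 by omega,
    sum_range_neg_one_pow_mul_sub_mul_sub, sum_add_distrib, sum_range_succ', sum_range_succ,
    hEven, hOdd]
  simp only [hSO, f, g, X, Y]
  grind [hSOPath]

section hSODiff

variable {K : Type*} [Field K] {n : ℕ}

theorem ker_hSODiff : LinearMap.ker (hSODiff K n) = allOnesLine K (2 * n) := by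
  ext x
  rw [LinearMap.mem_ker, allOnesLine, Submodule.mem_span_singleton]
  constructor
  · intro hx
    have hconst : ∀ k < 2 * n, coordFn (2 * n) x (hSOPath n k) = coordFn (2 * n) x n := by
      intro k hk
      induction k with
      | zero => rw [hSOPath_zero]
      | succ k ih =>
        have hk' := congrFun hx ⟨k, by omega⟩
        rw [hSODiff_apply, Pi.zero_apply, sub_eq_zero] at hk'
        rw [← ih (by omega), hk']
    refine ⟨coordFn (2 * n) x n, funext fun i => ?_⟩
    obtain ⟨k, hk, hki⟩ := exists_hSOPath_eq (n := n) (i := i + 1) (by omega) (by omega)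
    rw [Pi.smul_apply, smul_eq_mul, mul_one, ← hconst k hk, hki, coordFn_add_one]
  · rintro ⟨a, rfl⟩
    funext k
    have hk := hSOPath_mem (n := n) (k := k) (by omega)
    have hk' := hSOPath_mem (n := n) (k := k + 1) (by omega)
    simp [hSODiff_apply, coordFn, hk, hk']

theorem hSODiff_surjective (hn : 1 ≤ n) : Function.Surjective (hSODiff K n) := by
  rw [← LinearMap.range_eq_top]
  apply Submodule.eq_top_of_finrank_eq
  have hrank := LinearMap.finrank_range_add_finrank_ker (hSODiff K n)
  have hker : Module.finrank K (LinearMap.ker (hSODiff K n)) = 1 := by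
    rw [ker_hSODiff, allOnesLine]
    exact finrank_span_singleton fun h => one_ne_zero (congrFun h ⟨0, by omega⟩)
  rw [Module.finrank_fin_fun] at hrank ⊢
  omega

end hSODiff

theorem hSOWeight_ne_zero {K : Type*} [Field K] (h2 : (2 : K) ≠ 0) (m : ℕ) (k : Fin m) :
    hSOWeight K m k ≠ 0 :=
  div_ne_zero (pow_ne_zero _ (neg_ne_zero.mpr one_ne_zero)) h2

theorem prod_hSOWeight {K : Type*} [Field K] {n : ℕ} (hn : 1 ≤ n) :
    ∏ k, hSOWeight K (2 * n - 1) k = (-1) ^ n / 2 ^ (2 * n - 1) := by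
  obtain ⟨m, rfl⟩ : ∃ m, n = m + 1 := ⟨n - 1, by omega⟩
  simp only [hSOWeight]
  rw [Fin.prod_univ_eq_prod_range (fun k => (-1 : K) ^ (k + 1) / 2),
    show 2 * (m + 1) - 1 = 2 * m + 1 by omega, prod_div_distrib, prod_range_neg_one_pow_succ,
    prod_const, card_range]

/-- `h_n` is a symmetric bilinear form on `K^{2n}`; its radical is exactly
the line `K·(1,…,1)`; and the induced nondegenerate symmetric bilinear form on the
quotient `K^{2n}/K·(1,…,1)` has discriminant `2^{2n−1}(−1)^n` modulo squares: for any
basis of the quotient the Gram determinant of the induced form equals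
`2^{2n−1}(−1)^n·c²` for some `c ∈ K^×`. -/
theorem hSO_symm_radical_discriminant
    (K : Type) [Field K] (h2 : (2 : K) ≠ 0) (n : ℕ) (hn : 2 ≤ n) :
    (∀ x y : Fin (2 * n) → K, hSO n x y = hSO n y x) ∧
    (∀ (a : K) (x x' y : Fin (2 * n) → K),
        hSO n (a • x + x') y = a * hSO n x y + hSO n x' y) ∧
    (∀ (a : K) (x y y' : Fin (2 * n) → K),
        hSO n x (a • y + y') = a * hSO n x y + hSO n x y') ∧
    ({x : Fin (2 * n) → K | ∀ y, hSO n x y = 0}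
        = (allOnesLine K (2 * n) : Set (Fin (2 * n) → K))) ∧
    (∀ b : Fin (2 * n - 1) → (Fin (2 * n) → K),
        LinearIndependent K (fun i => (allOnesLine K (2 * n)).mkQ (b i)) →
        Submodule.span K (Set.range fun i => (allOnesLine K (2 * n)).mkQ (b i)) = ⊤ →
        ∃ c : K, c ≠ 0 ∧
          (Matrix.of fun i j => hSO n (b i) (b j)).det
            = 2 ^ (2 * n - 1) * (-1) ^ n * c ^ 2) := by
  simp only [hSO_eq_diagForm hn]
  refine ⟨diagForm_comm _ _, diagForm_smul_add_left _ _, diagForm_smul_add_right _ _, ?_, ?_⟩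
  · ext x
    rw [Set.mem_ofPred_eq, forall_diagForm_eq_zero_iff _ _ (hSODiff_surjective (by omega))
      (hSOWeight_ne_zero h2 _), ← LinearMap.mem_ker, ker_hSODiff, SetLike.mem_coe]
  · intro b hb _
    rw [← ker_hSODiff] at hb
    have h2pow : (2 : K) ^ (2 * n - 1) ≠ 0 := pow_ne_zero _ h2
    refine ⟨(Matrix.of fun i k => hSODiff K n (b i) k).det / 2 ^ (2 * n - 1),
      div_ne_zero (det_ne_zero_of_linearIndependent_mkQ_ker _ hb) h2pow, ?_⟩
    rw [det_diagForm, prod_hSOWeight (by omega)]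
    field_simp
end

section
/- Σ_{x ∈ 𝔽_q^{2n}} ψ(Q_n(x)) = χ(−2)·qⁿ·G(ψ). (Equivalently, the normalized Gauss sum of the form 𝐪 attached to a ramified even special orthogonal group equals χ(−2)·𝔫_ψ.) -/
/-!
The form `Q_n` is linear in `x_1, …, x_{n-1}`: after a summation by parts,
`2 Q_n(x) = 2 ∑_{i < n} x_i L_i(x_n, …, x_{2n}) + 2 x_{n+1} x_{n+2} - x_n² - x_{n+1}²`.
Summing `ψ` over `x_1, …, x_{n-1}` first gives `q^{n-1}` times the indicator of `L = 0`, and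
`L = 0` forces `x_n = x_{n+2} = ⋯ = x_{2n}`. On that plane `Q_n = -(x_{n+1} - x_n)² / 2`, whose
Gauss sum over the two free coordinates is `q · χ(-1/2) · G(ψ) = q · χ(-2) · G(ψ)`.
-/

open Finset

lemma AddChar.map_sum_eq_prod {A M ι : Type*} [AddCommMonoid A] [CommMonoid M] (ψ : AddChar A M)
    (s : Finset ι) (f : ι → A) :
    ψ (∑ i ∈ s, f i) = ∏ i ∈ s, ψ (f i) :=
  map_prod ψ.toMonoidHom (fun i => Multiplicative.ofAdd (f i)) s

lemma Fin.val_one_of_one_lt {m : ℕ} [NeZero m] (h : 1 < m) : ((1 : Fin m) : ℕ) = 1 := by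
  rw [Fin.val_one', Nat.mod_eq_of_lt h]

lemma Finset.sum_filter_forall_ne_eq_sum_update {ι K M : Type*} [Fintype ι] [DecidableEq ι]
    [Fintype K] [AddCommMonoid M] {i₀ i₁ : ι} (h : i₀ ≠ i₁)
    [DecidablePred fun b : ι → K => ∀ i ≠ i₁, b i = b i₀] (f : (ι → K) → M) :
    ∑ b with ∀ i ≠ i₁, b i = b i₀, f b
      = ∑ p : K × K, f (Function.update (fun _ => p.2) i₁ p.1) := by
  have recover {b : ι → K} (hb : ∀ i ≠ i₁, b i = b i₀) :
      Function.update (fun _ => b i₀) i₁ (b i₁) = b := by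
    funext i
    rcases eq_or_ne i i₁ with rfl | hi
    · exact Function.update_self ..
    · rw [Function.update_of_ne hi, hb i hi]
  refine sum_nbij' (fun b => (b i₁, b i₀)) (fun p => Function.update (fun _ => p.2) i₁ p.1)
    (by simp) ?_ (fun b hb => recover (mem_filter.mp hb).2) (by simp [h]) ?_
  · intro p _
    simp +contextual [h]
  · intro b hb
    rw [recover (mem_filter.mp hb).2]

lemma Fintype.sum_prod_sub {K M : Type*} [AddGroup K] [Fintype K] [AddCommMonoid M] (g : K → M) :
    ∑ p : K × K, g (p.1 - p.2) = Fintype.card K • ∑ t, g t := by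
  rw [Fintype.sum_prod_type, ← Finset.card_univ, ← Finset.sum_const]
  exact Finset.sum_congr rfl fun u _ => Fintype.sum_equiv (Equiv.subLeft u) _ _ fun _ => rfl

section CharacterSums

variable {F R : Type*} [Field F] [Fintype F]

lemma ringChar_ne_two_of_odd_card (hodd : Odd (Fintype.card F)) : ringChar F ≠ 2 := fun h => by
  have := FiniteField.even_card_iff_char_two.mp h
  rw [Nat.odd_iff] at hodd
  omega

variable [DecidableEq F]

lemma quadraticChar_inv (a : F) : quadraticChar F a⁻¹ = quadraticChar F a := by
  rw [← MulChar.inv_apply', (quadraticChar_isQuadratic F).inv]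

variable [CommRing R] [IsDomain R]

/-- Each `s` has `1 + χ(s)` square roots. -/
lemma sum_addChar_sq_eq_gaussSum (hF : ringChar F ≠ 2) {φ : AddChar F R} (hφ : φ ≠ 1) :
    ∑ t, φ (t ^ 2) = gaussSum ((quadraticChar F).ringHomComp (Int.castRingHom R)) φ := by
  have hcard (s : F) : (#{t : F | t ^ 2 = s} : R) = quadraticChar F s + 1 := by
    have := congrArg (Int.cast : ℤ → R) (quadraticChar_card_sqrts hF s)
    push_cast [Set.toFinset_ofPred] at this
    exact this
  calc ∑ t, φ (t ^ 2)
      = ∑ s, ∑ t with t ^ 2 = s, φ (t ^ 2) := (sum_fiberwise _ _ _).symm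
    _ = ∑ s, ((quadraticChar F s : R) * φ s + φ s) := by
        refine sum_congr rfl fun s _ => ?_
        rw [sum_congr rfl fun t ht => by rw [(mem_filter.mp ht).2], sum_const, nsmul_eq_mul,
          hcard, add_one_mul]
    _ = _ := by
        rw [sum_add_distrib, AddChar.sum_eq_zero_of_ne_one hφ, add_zero]
        rfl

lemma sum_addChar_mul_sq (hF : ringChar F ≠ 2) {ψ : AddChar F R} (hψ : ψ.IsPrimitive)
    {a : F} (ha : a ≠ 0) :
    ∑ t, ψ (a * t ^ 2) = quadraticChar F a * ∑ t, ψ (t ^ 2) := by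
  have hψ₁ : ψ ≠ 1 := fun h => by simpa [h] using hψ one_ne_zero
  simp_rw [← AddChar.mulShift_apply]
  rw [sum_addChar_sq_eq_gaussSum hF hψ₁, sum_addChar_sq_eq_gaussSum hF (hψ ha),
    ← Units.val_mk0 ha, gaussSum_mulShift_eq, MulChar.inv_apply', Units.val_mk0,
    MulChar.ringHomComp_apply, quadraticChar_inv]
  rfl

lemma sum_addChar_sum_mul {ψ : AddChar F R} (hψ : ψ.IsPrimitive) {ι : Type*} [Fintype ι]
    [DecidableEq ι] (w : ι → F) :
    ∑ a : ι → F, ψ (∑ i, a i * w i)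
      = if w = 0 then (Fintype.card F : R) ^ Fintype.card ι else 0 := by
  calc ∑ a : ι → F, ψ (∑ i, a i * w i) = ∏ i, ∑ t, ψ (t * w i) := by
        rw [Fintype.prod_sum]
        simp_rw [AddChar.map_sum_eq_prod]
    _ = _ := by
        simp only [AddChar.sum_mulShift _ hψ, Nat.cast_ite, Nat.cast_zero, Fintype.prod_ite_zero,
          prod_const, card_univ, funext_iff, Pi.zero_apply]

lemma sum_sum_addChar_sum_mul_add {ψ : AddChar F R} (hψ : ψ.IsPrimitive) {ι β : Type*}
    [Fintype ι] [DecidableEq ι] [Fintype β] (w : β → ι → F) (c : β → F) :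
    ∑ b, ∑ a : ι → F, ψ (∑ i, a i * w b i + c b)
      = (Fintype.card F : R) ^ Fintype.card ι * ∑ b with w b = 0, ψ (c b) := by
  simp_rw [AddChar.map_add_eq_mul, ← sum_mul, sum_addChar_sum_mul hψ, ite_mul, zero_mul,
    sum_ite, sum_const_zero, add_zero, mul_sum]

end CharacterSums

section FormAlgebra

variable {R : Type*} [CommRing R] {n : ℕ}

/-- The coefficient of `X (k + 1)` in `Q_n`; it only involves `X n, …, X (2 * n)`. -/
def hSOCoeff (n : ℕ) (X : ℕ → R) (k : ℕ) : R :=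
  if k = 0 then X n - X (2 * n) else X (2 * n + 1 - k) - X (2 * n - k)

def hSOConst (n : ℕ) (X : ℕ → R) : R :=
  2 * X (n + 1) * X (n + 2) - X n ^ 2 - X (n + 1) ^ 2

/-- The second sum, reindexed by `i ↦ 2 * n - i`, telescopes against the first. -/
lemma sum_Icc_add_sum_Icc_eq (hn : 2 ≤ n) (X : ℕ → R) :
    ∑ i ∈ Icc 2 (n - 1), (X (2 * n + 2 - i) - X (2 * n + 1 - i)) * X i
      + ∑ i ∈ Icc (n + 3) (2 * n), (X (2 * n + 2 - i) - X (2 * n + 1 - i)) * X i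
    = 2 * ∑ k ∈ range (n - 2), X (k + 2) * (X (2 * n - k) - X (2 * n - 1 - k))
      + (X (n - 1) * X (n + 2) - X 1 * X (2 * n)) := by
  have low : ∑ i ∈ Icc 2 (n - 1), (X (2 * n + 2 - i) - X (2 * n + 1 - i)) * X i
      = ∑ k ∈ range (n - 2), X (k + 2) * (X (2 * n - k) - X (2 * n - 1 - k)) := by
    refine sum_nbij' (· - 2) (· + 2) ?_ ?_ ?_ ?_ ?_ <;> intro i hi <;>
      simp only [mem_Icc, mem_range] at * <;> try omega
    rw [show i - 2 + 2 = i by omega, show 2 * n - (i - 2) = 2 * n + 2 - i by omega,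
      show 2 * n - 1 - (i - 2) = 2 * n + 1 - i by omega, mul_comm]
  have high : ∑ i ∈ Icc (n + 3) (2 * n), (X (2 * n + 2 - i) - X (2 * n + 1 - i)) * X i
      = ∑ k ∈ range (n - 2), (X (k + 2) - X (k + 1)) * X (2 * n - k) := by
    refine sum_nbij' (2 * n - ·) (2 * n - ·) ?_ ?_ ?_ ?_ ?_ <;> intro i hi <;>
      simp only [mem_Icc, mem_range] at * <;> try omega
    rw [show 2 * n - i + 2 = 2 * n + 2 - i by omega, show 2 * n - i + 1 = 2 * n + 1 - i by omega,
      show 2 * n - (2 * n - i) = i by omega]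
  have telescope : ∑ k ∈ range (n - 2), ((X (k + 2) - X (k + 1)) * X (2 * n - k)
        - X (k + 2) * (X (2 * n - k) - X (2 * n - 1 - k)))
      = X (n - 1) * X (n + 2) - X 1 * X (2 * n) := by
    have h := sum_range_sub (fun k => X (k + 1) * X (2 * n - k)) (n - 2)
    rw [show n - 2 + 1 = n - 1 by omega, show 2 * n - (n - 2) = n + 2 by omega, zero_add,
      Nat.sub_zero] at h
    rw [← h]
    refine sum_congr rfl fun k _ => ?_
    rw [show 2 * n - (k + 1) = 2 * n - 1 - k by omega]
    ring
  rw [sum_sub_distrib] at telescope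
  rw [low, high]
  linear_combination telescope

lemma hSO_bracket_eq (hn : 2 ≤ n) (X : ℕ → R) :
    (X n - X (2 * n)) * X 1 + (X 1 - X n) * X n
      + (X (n + 2) - X (n + 1)) * X (n + 1) + (X (n + 1) - X (n - 1)) * X (n + 2)
      + ∑ i ∈ Icc 2 (n - 1), (X (2 * n + 2 - i) - X (2 * n + 1 - i)) * X i
      + ∑ i ∈ Icc (n + 3) (2 * n), (X (2 * n + 2 - i) - X (2 * n + 1 - i)) * X i
    = 2 * ∑ k ∈ range (n - 1), X (k + 1) * hSOCoeff n X k + hSOConst n X := by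
  have coeffs : ∑ k ∈ range (n - 1), X (k + 1) * hSOCoeff n X k
      = X 1 * (X n - X (2 * n))
        + ∑ k ∈ range (n - 2), X (k + 2) * (X (2 * n - k) - X (2 * n - 1 - k)) := by
    rw [show n - 1 = n - 2 + 1 by omega, sum_range_succ', add_comm]
    congr 1
    refine sum_congr rfl fun k _ => ?_
    rw [hSOCoeff, if_neg k.succ_ne_zero, show 2 * n + 1 - (k + 1) = 2 * n - k by omega,
      show 2 * n - (k + 1) = 2 * n - 1 - k by omega]
  rw [add_assoc _ (∑ i ∈ Icc 2 (n - 1), _), sum_Icc_add_sum_Icc_eq hn, coeffs, hSOConst]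
  ring

lemma hSOCoeff_congr {X Y : ℕ → R} (h : ∀ j, n ≤ j → X j = Y j) {k : ℕ} (hk : k ≤ n) :
    hSOCoeff n X k = hSOCoeff n Y k := by
  simp only [hSOCoeff, h n le_rfl, h (2 * n) (by omega), h (2 * n + 1 - k) (by omega),
    h (2 * n - k) (by omega)]

lemma hSOConst_congr {X Y : ℕ → R} (h : ∀ j, n ≤ j → X j = Y j) :
    hSOConst n X = hSOConst n Y := by
  simp only [hSOConst, h n le_rfl, h (n + 1) (by omega), h (n + 2) (by omega)]

lemma hSOCoeff_eq_zero_iff (hn : 2 ≤ n) (X : ℕ → R) :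
    (∀ k : Fin (n - 1), hSOCoeff n X k = 0) ↔ ∀ j ∈ Icc n (2 * n), j ≠ n + 1 → X j = X n := by
  constructor
  · intro h
    have descend (d : ℕ) (hd : d ≤ n - 2) : X (2 * n - d) = X n := by
      induction d with
      | zero =>
        have h0 := h ⟨0, by omega⟩
        rw [hSOCoeff, if_pos rfl, sub_eq_zero] at h0
        simpa using h0.symm
      | succ d ih =>
        have hd' := h ⟨d + 1, by omega⟩
        rw [hSOCoeff, if_neg d.succ_ne_zero, sub_eq_zero,
          show 2 * n + 1 - (d + 1) = 2 * n - d by omega, ih (by omega)] at hd'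
        exact hd'.symm
    intro j hj hj1
    rw [mem_Icc] at hj
    obtain rfl | hj2 : j = n ∨ n + 2 ≤ j := by omega
    · rfl
    · simpa [show 2 * n - (2 * n - j) = j by omega] using descend (2 * n - j) (by omega)
  · intro h ⟨k, hk⟩
    have eq (j : ℕ) (h₁ : n + 2 ≤ j ∨ j = n) (h₂ : j ≤ 2 * n) : X j = X n :=
      h j (mem_Icc.mpr ⟨by omega, h₂⟩) (by omega)
    dsimp only [hSOCoeff]
    split_ifs
    · rw [eq (2 * n) (by omega) le_rfl, sub_self]
    · rw [eq (2 * n + 1 - k) (by omega) (by omega), eq (2 * n - k) (by omega) (by omega), sub_self]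

lemma hSOConst_eq_neg_sq {X : ℕ → R} (h : X (n + 2) = X n) :
    hSOConst n X = -(X (n + 1) - X n) ^ 2 := by
  rw [hSOConst, h]
  ring

lemma hSO_self_eq {K : Type*} [Field K] (hn : 2 ≤ n) (h2 : (2 : K) ≠ 0) (x : Fin (2 * n) → K) :
    hSO n x x = ∑ k ∈ range (n - 1), coordFn (2 * n) x (k + 1) * hSOCoeff n (coordFn (2 * n) x) k
      + 2⁻¹ * hSOConst n (coordFn (2 * n) x) := by
  simp only [hSO]
  rw [hSO_bracket_eq hn]
  field_simp

end FormAlgebra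

section Split

variable {K : Type*}

/-- `K^{2n} = K^{n-1} × K^{n+1}`, splitting off the coordinates in which `Q_n` is linear. -/
def hSOSplit (n : ℕ) [NeZero n] : (Fin (n - 1) → K) × (Fin (n + 1) → K) ≃ (Fin (2 * n) → K) :=
  (Fin.appendEquiv (n - 1) (n + 1)).trans
    ((finCongr (by have := NeZero.pos n; omega)).arrowCongr (Equiv.refl K))

variable {n : ℕ} [NeZero n]

lemma coordFn_hSOSplit_succ [Zero K] (a : Fin (n - 1) → K) (b : Fin (n + 1) → K) {k : ℕ}
    (hk : k < n - 1) :
    coordFn (2 * n) (hSOSplit n (a, b)) (k + 1) = a ⟨k, hk⟩ := by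
  rw [coordFn, dif_pos (by omega)]
  simp only [hSOSplit, Equiv.trans_apply, Fin.appendEquiv_apply, Equiv.arrowCongr_apply,
    Equiv.coe_refl, Function.comp_apply, finCongr_symm, finCongr_apply, Fin.cast_mk, id]
  exact Fin.append_left a b ⟨k, hk⟩

lemma coordFn_hSOSplit_add [Zero K] (a : Fin (n - 1) → K) (b : Fin (n + 1) → K)
    (i : Fin (n + 1)) :
    coordFn (2 * n) (hSOSplit n (a, b)) (n + i) = b i := by
  have := NeZero.pos n
  rw [coordFn, dif_pos (by omega)]
  simp only [hSOSplit, Equiv.trans_apply, Fin.appendEquiv_apply, Equiv.arrowCongr_apply,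
    Equiv.coe_refl, Function.comp_apply, finCongr_symm, finCongr_apply, Fin.cast_mk, id]
  rw [show (⟨n + i - 1, by omega⟩ : Fin (n - 1 + (n + 1))) = Fin.natAdd (n - 1) i from
    Fin.ext (by simp only [Fin.val_natAdd]; omega), Fin.append_right]

lemma coordFn_hSOSplit_of_le [Zero K] (a a' : Fin (n - 1) → K) (b : Fin (n + 1) → K) {j : ℕ}
    (hj : n ≤ j) :
    coordFn (2 * n) (hSOSplit n (a, b)) j = coordFn (2 * n) (hSOSplit n (a', b)) j := by
  by_cases hj' : j ≤ 2 * n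
  · obtain ⟨i, rfl⟩ : ∃ i : Fin (n + 1), j = n + i := ⟨⟨j - n, by omega⟩, by simp; omega⟩
    rw [coordFn_hSOSplit_add, coordFn_hSOSplit_add]
  · simp [coordFn, hj']

variable [Field K]

variable (n) in
def hSOSplitCoeff (b : Fin (n + 1) → K) (k : Fin (n - 1)) : K :=
  hSOCoeff n (coordFn (2 * n) (hSOSplit n (0, b))) k

variable (n) in
def hSOSplitConst (b : Fin (n + 1) → K) : K :=
  2⁻¹ * hSOConst n (coordFn (2 * n) (hSOSplit n (0, b)))

lemma hSO_hSOSplit (hn : 2 ≤ n) (h2 : (2 : K) ≠ 0) (a : Fin (n - 1) → K) (b : Fin (n + 1) → K) :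
    hSO n (hSOSplit n (a, b)) (hSOSplit n (a, b))
      = ∑ k, a k * hSOSplitCoeff n b k + hSOSplitConst n b := by
  have hX (j : ℕ) (hj : n ≤ j) : coordFn (2 * n) (hSOSplit n (a, b)) j
      = coordFn (2 * n) (hSOSplit n (0, b)) j :=
    coordFn_hSOSplit_of_le a 0 b hj
  rw [hSO_self_eq hn h2, ← Fin.sum_univ_eq_sum_range, hSOSplitConst, hSOConst_congr hX]
  congr 1
  refine sum_congr rfl fun k _ => ?_
  rw [coordFn_hSOSplit_succ a b k.isLt, hSOSplitCoeff, hSOCoeff_congr hX (by omega)]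

lemma hSOSplitCoeff_eq_zero_iff (hn : 2 ≤ n) (b : Fin (n + 1) → K) :
    hSOSplitCoeff n b = 0 ↔ ∀ i ≠ 1, b i = b 0 := by
  have hX (i : Fin (n + 1)) : coordFn (2 * n) (hSOSplit n (0, b)) (n + i) = b i :=
    coordFn_hSOSplit_add 0 b i
  have hX0 : coordFn (2 * n) (hSOSplit n (0, b)) n = b 0 := hX 0
  have hval (i : Fin (n + 1)) : i = 1 ↔ (i : ℕ) = 1 := by
    rw [Fin.ext_iff, Fin.val_one_of_one_lt (by omega)]
  simp only [funext_iff, Pi.zero_apply, hSOSplitCoeff]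
  rw [hSOCoeff_eq_zero_iff hn]
  constructor
  · intro h i hi
    rw [← hX, ← hX0]
    exact h (n + i) (mem_Icc.mpr ⟨by omega, by omega⟩) (by rw [Ne, hval] at hi; omega)
  · intro h j hj hj1
    rw [mem_Icc] at hj
    obtain ⟨i, rfl⟩ : ∃ i : Fin (n + 1), j = n + i := ⟨⟨j - n, by omega⟩, by simp; omega⟩
    rw [hX, hX0]
    exact h i (by rw [Ne, hval]; omega)

lemma hSOSplitConst_eq (hn : 2 ≤ n) {b : Fin (n + 1) → K} (hb : hSOSplitCoeff n b = 0) :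
    hSOSplitConst n b = -2⁻¹ * (b 1 - b 0) ^ 2 := by
  have hker := (hSOCoeff_eq_zero_iff hn _).mp fun k => congrFun hb k
  rw [hSOSplitConst,
    hSOConst_eq_neg_sq (hker (n + 2) (mem_Icc.mpr ⟨by omega, by omega⟩) (by omega)),
    ← coordFn_hSOSplit_add 0 b 1, ← coordFn_hSOSplit_add 0 b 0,
    Fin.val_one_of_one_lt (by omega), Fin.val_zero, add_zero]
  ring

end Split

/-- `Σ_{x ∈ 𝔽_q^{2n}} ψ(Q_n(x)) = χ(−2)·qⁿ·G(ψ)`, where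
`Q_n(x) = h_n(x,x)` is the form attached to a ramified even special orthogonal group
`SO_{2n}`, `χ` is the quadratic character of `𝔽_q^×` and `G(ψ) = Σ_t ψ(t²)`. -/
theorem gauss_sum_hSO_eq
    (F : Type) [Field F] [Fintype F] [DecidableEq F]
    (hodd : Odd (Fintype.card F))
    (ψ : AddChar F ℂ) (hψ : ψ ≠ 1)
    (n : ℕ) (hn : 2 ≤ n) :
    ∑ x : Fin (2 * n) → F, ψ (hSO n x x)
      = ((quadraticChar F (-2) : ℤ) : ℂ) * (Fintype.card F : ℂ) ^ n
          * ∑ t : F, ψ (t ^ 2) := by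
  have hF := ringChar_ne_two_of_odd_card hodd
  have h2 : (2 : F) ≠ 0 := Ring.two_ne_zero hF
  have hψ' := AddChar.IsPrimitive.of_ne_one hψ
  have : NeZero n := ⟨by omega⟩
  have h01 : (0 : Fin (n + 1)) ≠ 1 := by simp
  set q := (Fintype.card F : ℂ)
  calc ∑ x : Fin (2 * n) → F, ψ (hSO n x x)
      = ∑ b : Fin (n + 1) → F, ∑ a : Fin (n - 1) → F,
          ψ (∑ k, a k * hSOSplitCoeff n b k + hSOSplitConst n b) := by
        rw [← (hSOSplit n).sum_comp, Fintype.sum_prod_type, sum_comm]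
        simp only [hSO_hSOSplit hn h2]
    _ = q ^ (n - 1) * ∑ b : Fin (n + 1) → F with ∀ i ≠ 1, b i = b 0,
          ψ (-2⁻¹ * (b 1 - b 0) ^ 2) := by
        rw [sum_sum_addChar_sum_mul_add hψ', Fintype.card_fin]
        congr 1
        refine sum_congr (filter_congr fun b _ => hSOSplitCoeff_eq_zero_iff hn b) fun b hb => ?_
        rw [hSOSplitConst_eq hn ((hSOSplitCoeff_eq_zero_iff hn b).mpr (mem_filter.mp hb).2)]
    _ = q ^ (n - 1) * (q * (quadraticChar F (-2) * ∑ t, ψ (t ^ 2))) := by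
        rw [sum_filter_forall_ne_eq_sum_update h01]
        simp only [Function.update_self, Function.update_of_ne h01]
        rw [Fintype.sum_prod_sub fun t => ψ (-2⁻¹ * t ^ 2), nsmul_eq_mul,
          sum_addChar_mul_sq hF hψ' (by simpa using h2), ← inv_neg, quadraticChar_inv]
    _ = _ := by
        rw [← mul_assoc, ← pow_succ, Nat.sub_add_cancel (by omega)]
        ring
end

section
/- Let U = {y ∈ 𝔽_{q²}^× : y^{q+1} = 1} be the norm-one subgroup and λ : U → ℂ^× a group homomorphism. For every pair (X,Y) ∈ 𝔽_{q²} × 𝔽_{q²}^× with Y + Y^q = −X^{q+1}, the element 1 + X^{q+1}·Y⁻¹ equals −Y^{q−1} and lies in U, and Σ_{(X,Y) : Y + Y^q = −X^{q+1}, Y ≠ 0} λ(Y^{1−q})·λ(1 + X^{q+1}·Y⁻¹) = λ(−1)·(q³ − 1). (This is the computation of b_y·T_y(s_y) in the depth-zero U(1) example in the case λ̃ ↔ λ, i.e. λ̃(Y) = λ(Y^{1−q}).) -/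
/-- The norm-one subgroup `U = {y ∈ 𝔽_{q²}^× : y^{q+1} = 1}` of `K^×`. -/
def normOneSubgroup (K : Type*) [Field K] (q : ℕ) : Subgroup Kˣ where
  carrier := {u : Kˣ | (u : K) ^ (q + 1) = 1}
  one_mem' := by simp
  mul_mem' := by
    intro a b ha hb
    simp only [Set.mem_setOf_eq, Units.val_mul, mul_pow] at *
    rw [ha, hb, mul_one]
  inv_mem' := by
    intro a ha
    simp only [Set.mem_setOf_eq] at ha ⊢
    rw [Units.val_inv_eq_inv_val, inv_pow, ha, inv_one]

/-!
Since `#K = q²`, the map `x ↦ x ^ q` is a field automorphism, so `T y = y + y ^ q` is additive.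
Its kernel consists of roots of `y ^ q + y` and its image lies in the roots of `t ^ q - t`, so
both have at most `q` elements; as their sizes multiply to `q²`, every fibre of `T` over a fixed
point of `x ↦ x ^ q`, such as `-X ^ (q + 1)`, has exactly `q` elements. Hence the equation
`Y + Y ^ q = -X ^ (q + 1)` has `q³` solutions, `q³ - 1` of them with `Y ≠ 0`. For each of these,
`u = Y ^ (q - 1)` has norm one and the summand is `λ(u⁻¹) λ(-u) = λ(-1)`.
-/

open Finset

theorem AddMonoidHom.card_filter_eq_apply {G H : Type*} [AddGroup G] [Fintype G] [AddGroup H]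
    [DecidableEq H] (f : G →+ H) (x : G) : #{y | f y = f x} = #{y | f y = 0} := by
  refine card_nbij' (· - x) (· + x) (fun y hy => ?_) (fun y hy => ?_)
    (fun y _ => sub_add_cancel y x) (fun y _ => add_sub_cancel_right y x) <;>
    simp_all [map_sub, map_add]

theorem AddMonoidHom.card_image_mul_card_ker {G H : Type*} [AddGroup G] [Fintype G] [AddGroup H]
    [DecidableEq H] (f : G →+ H) : #(univ.image f) * #{y | f y = 0} = Fintype.card G := by
  rw [card_univ.symm, card_eq_sum_card_image f univ, sum_const_nat]
  rintro _ hx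
  obtain ⟨x, -, rfl⟩ := mem_image.mp hx
  exact f.card_filter_eq_apply x

theorem AddMonoidHom.card_filter_eq_of_card_eq_sq {G : Type*} [AddGroup G] [Fintype G]
    [DecidableEq G] (f : G →+ G) {S : Finset G} {n : ℕ} (hG : Fintype.card G = n ^ 2)
    (hker : #{y | f y = 0} ≤ n) (hS : #S ≤ n) (hfS : ∀ x, f x ∈ S) {t : G} (ht : t ∈ S) :
    #{y | f y = t} = n := by
  have himage : univ.image f ⊆ S := by simpa [subset_iff] using hfS
  have hprod := f.card_image_mul_card_ker
  have hker_eq : #{y | f y = 0} = n := by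
    have := card_le_card himage
    nlinarith
  have himage_eq : univ.image f = S := by
    refine eq_of_subset_of_card_le himage ?_
    nlinarith
  obtain ⟨x, -, rfl⟩ := mem_image.mp (himage_eq ▸ ht)
  rw [f.card_filter_eq_apply, hker_eq]

open Polynomial in
theorem card_filter_pow_eq_mul_le {K : Type*} [Field K] [Fintype K] [DecidableEq K] {q : ℕ}
    (hq : 2 ≤ q) (c : K) : #{y : K | y ^ q = c * y} ≤ q := by
  have hdeg : (X ^ q - C c * X).natDegree = q := by
    rw [natDegree_sub_eq_left_of_natDegree_lt] <;> simp only [natDegree_X_pow]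
    exact ((natDegree_C_mul_le c X).trans natDegree_X_le).trans_lt (by omega)
  have hne : X ^ q - C c * X ≠ 0 := ne_zero_of_natDegree_gt (hdeg ▸ (by omega : 0 < q))
  refine hdeg ▸ card_le_degree_of_subset_roots fun y hy => ?_
  simp_all [sub_eq_zero]

section FiniteField

variable {K : Type*} [Field K] [Fintype K] {q : ℕ}

theorem exists_ringHom_eq_pow_of_dvd_card (hq : q ∣ Fintype.card K) :
    ∃ φ : K →+* K, ∀ x, φ x = x ^ q := by
  obtain ⟨p, _, n, hp, hcard⟩ := FiniteField.card' K
  obtain ⟨m, -, rfl⟩ := (Nat.dvd_prime_pow hp).mp (hcard ▸ hq)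
  have := Fact.mk hp
  exact ⟨iterateFrobenius K p m, iterateFrobenius_def p m⟩

theorem neg_pow_add_one_of_dvd_card (hq : q ∣ Fintype.card K) (u : K) :
    (-u) ^ (q + 1) = u ^ (q + 1) := by
  obtain ⟨φ, hφ⟩ := exists_ringHom_eq_pow_of_dvd_card hq
  rw [pow_succ, ← hφ, map_neg, hφ, neg_mul_neg, pow_succ]

variable (hcard : Fintype.card K = q ^ 2)
include hcard

theorem pow_sub_one_pow_add_one_of_card_eq_sq {y : K} (hy : y ≠ 0) :
    (y ^ (q - 1)) ^ (q + 1) = 1 := by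
  rw [← pow_mul, mul_comm, ← one_pow 2, ← Nat.pow_two_sub_pow_two, one_pow, ← hcard]
  exact FiniteField.pow_card_sub_one_eq_one y hy

theorem pow_pow_of_card_eq_sq (x : K) : (x ^ q) ^ q = x := by
  rw [← pow_mul, ← sq, ← hcard, FiniteField.pow_card]

theorem two_le_of_card_eq_sq : 2 ≤ q := by
  have := hcard ▸ Fintype.one_lt_card (α := K)
  by_contra! h
  interval_cases q <;> simp at this

theorem card_filter_add_pow_eq [DecidableEq K] {t : K} (ht : t ^ q = t) :
    #{y : K | y + y ^ q = t} = q := by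
  obtain ⟨φ, hφ⟩ := exists_ringHom_eq_pow_of_dvd_card (hcard ▸ dvd_pow_self q two_ne_zero)
  let T : K →+ K := AddMonoidHom.id K + φ.toAddMonoidHom
  have hT (y : K) : T y = y + y ^ q := by simp [T, hφ]
  have hq := two_le_of_card_eq_sq hcard
  simp only [← hT]
  refine T.card_filter_eq_of_card_eq_sq hcard ?_ (card_filter_pow_eq_mul_le hq 1) ?_ (by simpa)
  · refine (card_le_card fun y => ?_).trans (card_filter_pow_eq_mul_le hq (-1))
    simp only [mem_filter, mem_univ, true_and, hT]
    intro h; linear_combination h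
  · intro y
    rw [mem_filter, hT, one_mul, ← hφ (y + y ^ q), map_add, hφ, hφ, pow_pow_of_card_eq_sq hcard,
      add_comm]
    exact ⟨mem_univ _, rfl⟩

theorem neg_pow_add_one_pow_of_card_eq_sq (x : K) : (-x ^ (q + 1)) ^ q = -x ^ (q + 1) := by
  obtain ⟨φ, hφ⟩ := exists_ringHom_eq_pow_of_dvd_card (hcard ▸ dvd_pow_self q two_ne_zero)
  rw [← hφ, map_neg, hφ, pow_succ, mul_pow, pow_pow_of_card_eq_sq hcard, ← pow_succ', ← pow_succ]

theorem card_filter_add_pow_eq_neg_pow_add_one [DecidableEq K] :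
    #{p : K × K | p.2 + p.2 ^ q = -p.1 ^ (q + 1)} = q ^ 3 := by
  rw [card_filter, Fintype.sum_prod_type]
  simp only [← card_filter,
    card_filter_add_pow_eq hcard (neg_pow_add_one_pow_of_card_eq_sq hcard _), sum_const,
    card_univ, hcard, smul_eq_mul]
  ring

theorem card_filter_ne_zero_add_pow_eq_neg_pow_add_one [DecidableEq K] :
    #{p : K × K | p.2 ≠ 0 ∧ p.2 + p.2 ^ q = -p.1 ^ (q + 1)} = q ^ 3 - 1 := by
  have hq : q ≠ 0 := by have := two_le_of_card_eq_sq hcard; omega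
  have hset : ({p : K × K | p.2 ≠ 0 ∧ p.2 + p.2 ^ q = -p.1 ^ (q + 1)} : Finset _) =
      ({p : K × K | p.2 + p.2 ^ q = -p.1 ^ (q + 1)} : Finset _).erase 0 := by
    ext ⟨x, y⟩
    simp only [mem_filter, mem_univ, true_and, mem_erase, ne_eq, Prod.mk_eq_zero]
    refine and_congr_left fun h => not_congr ⟨fun hy => ⟨?_, hy⟩, And.right⟩
    simpa [hy, zero_pow hq, hq] using h
  rw [hset, card_erase_of_mem (by simp [zero_pow hq]), card_filter_add_pow_eq_neg_pow_add_one hcard]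

end FiniteField

theorem one_add_pow_mul_inv_eq {K : Type*} [Field K] {q : ℕ} (hq : q ≠ 0) {x y : K} (hy : y ≠ 0)
    (h : y + y ^ q = -x ^ (q + 1)) : 1 + x ^ (q + 1) * y⁻¹ = -y ^ (q - 1) := by
  have hx : x ^ (q + 1) = -(y + y ^ (q - 1) * y) := by
    rw [← pow_succ, Nat.sub_add_cancel (Nat.one_le_iff_ne_zero.mpr hq), h, neg_neg]
  rw [hx]
  field_simp
  ring

theorem apply_inv_mul_apply_neg {K M : Type*} [Field K] [Monoid M] {S : Subgroup Kˣ}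
    (lam : S →* Mˣ) {f : K → M} (hf : ∀ u : S, f (u : Kˣ) = lam u) (hneg : -1 ∈ S)
    {u : Kˣ} (hu : u ∈ S) : f (u : K)⁻¹ * f (-(u : K)) = f (-1) := by
  have hinv := S.inv_mem hu
  have hneg_u : -u ∈ S := by simpa using S.mul_mem hneg hu
  have hprod : (⟨u⁻¹, hinv⟩ * ⟨-u, hneg_u⟩ : S) = ⟨-1, hneg⟩ := by ext; simp
  calc f (u : K)⁻¹ * f (-(u : K)) = lam ⟨u⁻¹, hinv⟩ * lam ⟨-u, hneg_u⟩ := by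
        rw [← hf, ← hf, Units.val_inv_eq_inv_val, Units.val_neg]
    _ = f (-1) := by rw [← Units.val_mul, ← map_mul, hprod, ← hf]; rfl

theorem gauss_sum_U1_depth_zero_general
    (q : ℕ)
    (K : Type) [Field K] [Fintype K] [DecidableEq K]
    (hcard : Fintype.card K = q ^ 2)
    (lam : (normOneSubgroup K q) →* ℂˣ)
    (f : K → ℂ)
    (hf : ∀ u : normOneSubgroup K q, f ((u : Kˣ) : K) = ((lam u : ℂˣ) : ℂ)) :
    (∀ X Y : K, Y ≠ 0 → Y + Y ^ q = -(X ^ (q + 1)) →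
      1 + X ^ (q + 1) * Y⁻¹ = -(Y ^ (q - 1)) ∧
        (1 + X ^ (q + 1) * Y⁻¹) ^ (q + 1) = 1) ∧
    ∑ p ∈ (Finset.univ : Finset (K × K)).filter
        (fun p => p.2 ≠ 0 ∧ p.2 + p.2 ^ q = -(p.1 ^ (q + 1))),
        f ((p.2 ^ (q - 1))⁻¹) * f (1 + p.1 ^ (q + 1) * p.2⁻¹)
      = f (-1) * ((q : ℂ) ^ 3 - 1) := by
  have hq : q ≠ 0 := by have := two_le_of_card_eq_sq hcard; omega
  have hdvd : q ∣ Fintype.card K := hcard ▸ dvd_pow_self q two_ne_zero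
  have hnorm {y : K} (hy : y ≠ 0) :
      Units.mk0 (y ^ (q - 1)) (pow_ne_zero _ hy) ∈ normOneSubgroup K q :=
    pow_sub_one_pow_add_one_of_card_eq_sq hcard hy
  have hneg : (-1 : Kˣ) ∈ normOneSubgroup K q := by
    change ((-1 : Kˣ) : K) ^ (q + 1) = 1
    rw [Units.val_neg, Units.val_one, neg_pow_add_one_of_dvd_card hdvd, one_pow]
  refine ⟨fun x y hy h => ⟨one_add_pow_mul_inv_eq hq hy h, ?_⟩, ?_⟩
  · rw [one_add_pow_mul_inv_eq hq hy h, neg_pow_add_one_of_dvd_card hdvd]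
    exact pow_sub_one_pow_add_one_of_card_eq_sq hcard hy
  · rw [sum_congr rfl fun p hp => ?_, sum_const,
      card_filter_ne_zero_add_pow_eq_neg_pow_add_one hcard, nsmul_eq_mul,
      Nat.cast_sub (Nat.one_le_pow _ _ (Nat.pos_of_ne_zero hq)), Nat.cast_pow, Nat.cast_one,
      mul_comm]
    obtain ⟨hy, h⟩ := (mem_filter.mp hp).2
    rw [one_add_pow_mul_inv_eq hq hy h]
    exact apply_inv_mul_apply_neg lam hf hneg (hnorm hy)

/-- Let `U` be the norm-one subgroup of `𝔽_{q²}^×` and `λ : U → ℂ^×` a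
group homomorphism. For every pair `(X,Y)` with `Y ≠ 0` and `Y + Y^q = −X^{q+1}`, the
element `1 + X^{q+1}·Y⁻¹` equals `−Y^{q−1}` and lies in `U`, and
`Σ_{(X,Y)} λ(Y^{1−q})·λ(1 + X^{q+1}·Y⁻¹) = λ(−1)·(q³ − 1)`. -/
theorem gauss_sum_U1_depth_zero
    (q : ℕ) (hq : Odd q)
    (K : Type) [Field K] [Fintype K] [DecidableEq K]
    (hcard : Fintype.card K = q ^ 2)
    (lam : (normOneSubgroup K q) →* ℂˣ)
    (f : K → ℂ)
    (hf : ∀ u : normOneSubgroup K q, f ((u : Kˣ) : K) = ((lam u : ℂˣ) : ℂ)) :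
    (∀ X Y : K, Y ≠ 0 → Y + Y ^ q = -(X ^ (q + 1)) →
      1 + X ^ (q + 1) * Y⁻¹ = -(Y ^ (q - 1)) ∧
        (1 + X ^ (q + 1) * Y⁻¹) ^ (q + 1) = 1) ∧
    ∑ p ∈ (Finset.univ : Finset (K × K)).filter
        (fun p => p.2 ≠ 0 ∧ p.2 + p.2 ^ q = -(p.1 ^ (q + 1))),
        f ((p.2 ^ (q - 1))⁻¹) * f (1 + p.1 ^ (q + 1) * p.2⁻¹)
      = f (-1) * ((q : ℂ) ^ 3 - 1) :=
  gauss_sum_U1_depth_zero_general q K hcard lam f hf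
end

section
/- Suppose β₁ ∈ GL_m(F) satisfies α(β₁) = β₁ and β₂ ∈ M_{n×n}(F) satisfies α(β₂) = β₂. Then for every X ∈ M_{m×n}(F): α((X − β₁⁻¹·X·β₂)·α(X)) = −X·(α(X) − β₂·α(X)·β₁⁻¹). (This is the key identity in the proof that the quadratic form 𝐪_{z,𝐬} is Hermitian-symmetric, Proposition on properties of quadratic forms, part (ii).) -/
open Matrix

/-- The map `α(X) = −H₂⁻¹·σ(X)ᵀ·H₁` on rectangular matrices `X ∈ M_{m×n}(F)`
(taking `H₁ = H₂` gives the map `α` on square matrices). -/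
noncomputable def alphaMap {F : Type*} [Field F] {m n : ℕ} (σ : F →+* F)
    (H₁ : Matrix (Fin m) (Fin m) F) (H₂ : Matrix (Fin n) (Fin n) F)
    (X : Matrix (Fin m) (Fin n) F) : Matrix (Fin n) (Fin m) F :=
  -(H₂⁻¹ * (X.map σ)ᵀ * H₁)

/-- `σ` entrywise commutes with matrix inversion. -/
lemma map_inv_comm' {F : Type} [Field F] {k : ℕ} (σ : F →+* F)
    (A : Matrix (Fin k) (Fin k) F) (hA : IsUnit A) :
    (A⁻¹).map σ = (A.map σ)⁻¹ := by
  have h1 : A * A⁻¹ = 1 := mul_nonsing_inv A ((isUnit_iff_isUnit_det A).1 hA)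
  have : (A.map σ) * ((A⁻¹).map σ) = 1 := by
    rw [← Matrix.map_mul, h1, Matrix.map_one σ (map_zero σ) (map_one σ)]
  exact (inv_eq_right_inv this).symm

/-- anti-multiplicativity: `α(YZ) = −α(Z)·α(Y)`. -/
lemma alphaMap_antimul {F : Type} [Field F] {m n : ℕ} (σ : F →+* F)
    (H₁ : Matrix (Fin m) (Fin m) F) (H₂ : Matrix (Fin n) (Fin n) F)
    (hH₂ : IsUnit H₂)
    (Y : Matrix (Fin m) (Fin n) F) (Z : Matrix (Fin n) (Fin m) F) :
    alphaMap σ H₁ H₁ (Y * Z) = -(alphaMap σ H₂ H₁ Z * alphaMap σ H₁ H₂ Y) := by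
  haveI := hH₂.invertible
  simp only [alphaMap, Matrix.map_mul, Matrix.transpose_mul, Matrix.neg_mul,
    Matrix.mul_neg, neg_neg, Matrix.mul_assoc, Matrix.mul_inv_cancel_left_of_invertible]

/-- `α` is additive (preserves subtraction). -/
lemma alphaMap_sub {F : Type} [Field F] {m n : ℕ} (σ : F →+* F)
    (H₁ : Matrix (Fin m) (Fin m) F) (H₂ : Matrix (Fin n) (Fin n) F)
    (Y Z : Matrix (Fin m) (Fin n) F) :
    alphaMap σ H₁ H₂ (Y - Z) = alphaMap σ H₁ H₂ Y - alphaMap σ H₁ H₂ Z := by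
  simp only [alphaMap, Matrix.map_sub σ (map_sub σ), Matrix.transpose_sub,
    Matrix.mul_sub, Matrix.sub_mul, neg_sub]
  abel

/-- involutivity: `α(α(X)) = X`. -/
lemma alphaMap_invol {F : Type} [Field F] {m n : ℕ} (σ : F →+* F) (hσ : ∀ x, σ (σ x) = x)
    (ε : F) (hεε : ε * ε = 1)
    (H₁ : Matrix (Fin m) (Fin m) F) (H₂ : Matrix (Fin n) (Fin n) F)
    (hH₁ : IsUnit H₁) (hH₂ : IsUnit H₂)
    (hH₁herm : (H₁.map σ)ᵀ = ε • H₁) (hH₂herm : (H₂.map σ)ᵀ = ε • H₂)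
    (X : Matrix (Fin m) (Fin n) F) :
    alphaMap σ H₂ H₁ (alphaMap σ H₁ H₂ X) = X := by
  haveI := hH₁.invertible
  haveI := hH₂.invertible
  have hc2 : H₂⁻¹ * H₂ = 1 := nonsing_inv_mul H₂ ((isUnit_iff_isUnit_det H₂).1 hH₂)
  have hc2' : H₂ * H₂⁻¹ = 1 := mul_nonsing_inv H₂ ((isUnit_iff_isUnit_det H₂).1 hH₂)
  have hmapmap : (X.map σ).map σ = X := by ext i j; simp [hσ]
  have hneg : ∀ (A : Matrix (Fin n) (Fin m) F), (-A).map σ = -(A.map σ) := by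
    intro A; ext i j; simp
  have hinv2 : ((H₂.map σ)ᵀ)⁻¹ = ε • H₂⁻¹ := by
    rw [hH₂herm]
    refine inv_eq_right_inv ?_
    rw [Matrix.smul_mul, Matrix.mul_smul, smul_smul, hεε, hc2', one_smul]
  simp only [alphaMap, hneg, Matrix.map_mul, map_inv_comm' σ H₂ hH₂,
    Matrix.transpose_map, hmapmap, Matrix.transpose_neg, Matrix.transpose_mul,
    Matrix.transpose_transpose, Matrix.mul_neg, Matrix.neg_mul, neg_neg,
    Matrix.transpose_nonsing_inv, hinv2, hH₁herm,
    Matrix.smul_mul, Matrix.mul_smul, smul_smul, hεε, one_smul, Matrix.mul_assoc,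
    Matrix.inv_mul_cancel_left_of_invertible, hc2, Matrix.mul_one]

/-- sandwich identity: `α(β₁⁻¹·X·β₂) = β₂·α(X)·β₁⁻¹` for `α`-fixed `β₁, β₂`. -/
lemma alphaMap_sandwich
    (F : Type) [Field F] (σ : F →+* F) (m n : ℕ)
    (H₁ : Matrix (Fin m) (Fin m) F) (H₂ : Matrix (Fin n) (Fin n) F)
    (hH₁ : IsUnit H₁) (hH₂ : IsUnit H₂)
    (β₁ : Matrix (Fin m) (Fin m) F) (hβ₁ : IsUnit β₁)
    (hβ₁α : alphaMap σ H₁ H₁ β₁ = β₁)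
    (β₂ : Matrix (Fin n) (Fin n) F)
    (hβ₂α : alphaMap σ H₂ H₂ β₂ = β₂)
    (X : Matrix (Fin m) (Fin n) F) :
    alphaMap σ H₁ H₂ (β₁⁻¹ * X * β₂) = β₂ * alphaMap σ H₁ H₂ X * β₁⁻¹ := by
  haveI := hH₁.invertible
  haveI := hH₂.invertible
  haveI := hβ₁.invertible
  have hc1 : H₁⁻¹ * H₁ = 1 := nonsing_inv_mul H₁ ((isUnit_iff_isUnit_det H₁).1 hH₁)
  have hc1' : H₁ * H₁⁻¹ = 1 := mul_nonsing_inv H₁ ((isUnit_iff_isUnit_det H₁).1 hH₁)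
  have hc2 : H₂⁻¹ * H₂ = 1 := nonsing_inv_mul H₂ ((isUnit_iff_isUnit_det H₂).1 hH₂)
  have hc2' : H₂ * H₂⁻¹ = 1 := mul_nonsing_inv H₂ ((isUnit_iff_isUnit_det H₂).1 hH₂)
  have hb1 : (β₁.map σ)ᵀ = -(H₁ * (β₁ * H₁⁻¹)) := by
    have h := congrArg (fun M => -(H₁ * M * H₁⁻¹)) hβ₁α
    simp only [alphaMap, Matrix.mul_neg, Matrix.neg_mul, neg_neg, Matrix.mul_assoc,
      Matrix.mul_inv_cancel_left_of_invertible, hc1', Matrix.mul_one] at h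
    exact h.symm ▸ rfl
  have hb2 : (β₂.map σ)ᵀ = -(H₂ * (β₂ * H₂⁻¹)) := by
    have h := congrArg (fun M => -(H₂ * M * H₂⁻¹)) hβ₂α
    simp only [alphaMap, Matrix.mul_neg, Matrix.neg_mul, neg_neg, Matrix.mul_assoc,
      Matrix.mul_inv_cancel_left_of_invertible, hc2', Matrix.mul_one] at h
    exact h.symm ▸ rfl
  have hb1inv : ((β₁⁻¹).map σ)ᵀ = -(H₁ * (β₁⁻¹ * H₁⁻¹)) := by
    rw [map_inv_comm' σ β₁ hβ₁, Matrix.transpose_nonsing_inv]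
    refine inv_eq_right_inv ?_
    rw [hb1]
    simp only [Matrix.neg_mul, Matrix.mul_neg, neg_neg, Matrix.mul_assoc,
      Matrix.inv_mul_cancel_left_of_invertible, Matrix.mul_inv_cancel_left_of_invertible,
      hc1', Matrix.mul_one]
  simp only [alphaMap, Matrix.map_mul, Matrix.transpose_mul, hb1inv, hb2,
    Matrix.neg_mul, Matrix.mul_neg, neg_neg, Matrix.mul_assoc,
    Matrix.inv_mul_cancel_left_of_invertible, Matrix.mul_inv_cancel_left_of_invertible,
    hc1, hc1', hc2, hc2', Matrix.mul_one]

/-- If `α(β₁) = β₁` with `β₁ ∈ GL_m(F)` and `α(β₂) = β₂`, then for every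
`X ∈ M_{m×n}(F)`: `α((X − β₁⁻¹·X·β₂)·α(X)) = −X·(α(X) − β₂·α(X)·β₁⁻¹)`. -/
theorem alphaMap_key_identity
    (F : Type) [Field F] (σ : F →+* F) (hσ : ∀ x, σ (σ x) = x)
    (ε : F) (hε : ε = 1 ∨ ε = -1) (m n : ℕ)
    (H₁ : Matrix (Fin m) (Fin m) F) (H₂ : Matrix (Fin n) (Fin n) F)
    (hH₁ : IsUnit H₁) (hH₂ : IsUnit H₂)
    (hH₁herm : (H₁.map σ)ᵀ = ε • H₁) (hH₂herm : (H₂.map σ)ᵀ = ε • H₂)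
    (β₁ : Matrix (Fin m) (Fin m) F) (hβ₁ : IsUnit β₁)
    (hβ₁α : alphaMap σ H₁ H₁ β₁ = β₁)
    (β₂ : Matrix (Fin n) (Fin n) F)
    (hβ₂α : alphaMap σ H₂ H₂ β₂ = β₂)
    (X : Matrix (Fin m) (Fin n) F) :
    alphaMap σ H₁ H₁ ((X - β₁⁻¹ * X * β₂) * alphaMap σ H₁ H₂ X)
      = -(X * (alphaMap σ H₁ H₂ X - β₂ * alphaMap σ H₁ H₂ X * β₁⁻¹)) := by
  have hεε : ε * ε = 1 := by rcases hε with h | h <;> simp [h]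
  rw [alphaMap_antimul σ H₁ H₂ hH₂, alphaMap_sub, alphaMap_sandwich F σ m n H₁ H₂ hH₁ hH₂
      β₁ hβ₁ hβ₁α β₂ hβ₂α,
    alphaMap_invol σ hσ ε hεε H₁ H₂ hH₁ hH₂ hH₁herm hH₂herm]
end

section
/- Suppose β₁ ∈ GL_m(F) satisfies α(β₁) = β₁ and β₂ ∈ M_{n×n}(F) satisfies α(β₂) = β₂. Then for every X ∈ M_{m×n}(F), the scalar Q(X) = tr((X − β₁⁻¹·X·β₂)·α(X)) is fixed by σ, i.e. σ(tr((X − β₁⁻¹·X·β₂)·α(X))) = tr((X − β₁⁻¹·X·β₂)·α(X)); in other words the quadratic form 𝐪_{z,𝐬}(X) = tr((X − β₁⁻¹·X·β₂)·α(X)) takes its values in the fixed field F^σ. (Proposition on properties of quadratic forms, part (ii): the form 𝐪_{z,𝐬} is Hermitian-symmetric.) -/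
open Matrix

/-- Map by a ring endomorphism commutes with nonsingular inverse. -/
private lemma mapInvAux {F : Type*} [Field F] (σ : F →+* F) {k : ℕ}
    (A : Matrix (Fin k) (Fin k) F) (hA : IsUnit A) :
    (A⁻¹).map σ = (A.map σ)⁻¹ := by
  have h1 : A⁻¹ * A = 1 := Matrix.nonsing_inv_mul A ((Matrix.isUnit_iff_isUnit_det A).mp hA)
  refine (Matrix.inv_eq_left_inv ?_).symm
  rw [← Matrix.map_mul, h1]
  exact Matrix.map_one σ (map_zero σ) (map_one σ)

/-- If `α(β₁) = β₁` with `β₁ ∈ GL_m(F)` and `α(β₂) = β₂`, then for every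
`X ∈ M_{m×n}(F)` the scalar `Q(X) = tr((X − β₁⁻¹·X·β₂)·α(X))` is fixed by `σ`, i.e.
the quadratic form `𝐪_{z,𝐬}` takes its values in the fixed field `F^σ`. -/
theorem alphaMap_trace_fixed_by_sigma
    (F : Type) [Field F] (σ : F →+* F) (hσ : ∀ x, σ (σ x) = x)
    (ε : F) (hε : ε = 1 ∨ ε = -1) (m n : ℕ)
    (H₁ : Matrix (Fin m) (Fin m) F) (H₂ : Matrix (Fin n) (Fin n) F)
    (hH₁ : IsUnit H₁) (hH₂ : IsUnit H₂)
    (hH₁herm : (H₁.map σ)ᵀ = ε • H₁) (hH₂herm : (H₂.map σ)ᵀ = ε • H₂)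
    (β₁ : Matrix (Fin m) (Fin m) F) (hβ₁ : IsUnit β₁)
    (hβ₁α : alphaMap σ H₁ H₁ β₁ = β₁)
    (β₂ : Matrix (Fin n) (Fin n) F)
    (hβ₂α : alphaMap σ H₂ H₂ β₂ = β₂)
    (X : Matrix (Fin m) (Fin n) F) :
    σ (Matrix.trace ((X - β₁⁻¹ * X * β₂) * alphaMap σ H₁ H₂ X))
      = Matrix.trace ((X - β₁⁻¹ * X * β₂) * alphaMap σ H₁ H₂ X) := by
  have hH₁d := (Matrix.isUnit_iff_isUnit_det H₁).mp hH₁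
  have hH₂d := (Matrix.isUnit_iff_isUnit_det H₂).mp hH₂
  have hβ₁d := (Matrix.isUnit_iff_isUnit_det β₁).mp hβ₁
  have h1l : H₁⁻¹ * H₁ = 1 := Matrix.nonsing_inv_mul H₁ hH₁d
  have h1r : H₁ * H₁⁻¹ = 1 := Matrix.mul_nonsing_inv H₁ hH₁d
  have h2l : H₂⁻¹ * H₂ = 1 := Matrix.nonsing_inv_mul H₂ hH₂d
  have h2r : H₂ * H₂⁻¹ = 1 := Matrix.mul_nonsing_inv H₂ hH₂d
  have hb1r : β₁ * β₁⁻¹ = 1 := Matrix.mul_nonsing_inv β₁ hβ₁d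
  have hε2 : ε * ε = 1 := by rcases hε with h | h <;> simp [h]
  set S : Matrix (Fin m) (Fin n) F := X.map σ with hS
  have hSS : S.map σ = X := by ext i j; simp [hS, hσ]
  have hH1σ : H₁.map σ = ε • H₁ᵀ := by
    have := congrArg Matrix.transpose hH₁herm
    simpa using this
  have hH2σ : H₂.map σ = ε • H₂ᵀ := by
    have := congrArg Matrix.transpose hH₂herm
    simpa using this
  have hH2iσ : (H₂⁻¹).map σ = ε • (H₂⁻¹)ᵀ := by
    rw [mapInvAux σ H₂ hH₂, hH2σ]
    refine Matrix.inv_eq_left_inv ?_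
    rw [Matrix.smul_mul, Matrix.mul_smul, smul_smul, hε2, one_smul,
      ← Matrix.transpose_mul, h2r, Matrix.transpose_one]
  have canc : ∀ {k : ℕ} (A B : Matrix (Fin k) (Fin k) F), A * B = 1 →
      ∀ {p : ℕ} (Z : Matrix (Fin k) (Fin p) F), A * (B * Z) = Z := by
    intro k A B h p Z
    rw [← Matrix.mul_assoc, h, Matrix.one_mul]
  have tcanc : ∀ {k : ℕ} (A B : Matrix (Fin k) (Fin k) F), A * B = 1 →
      ∀ {p : ℕ} (Z : Matrix (Fin k) (Fin p) F), Bᵀ * (Aᵀ * Z) = Z := by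
    intro k A B h p Z
    rw [← Matrix.mul_assoc, ← Matrix.transpose_mul, h, Matrix.transpose_one, Matrix.one_mul]
  have hb1σ : β₁.map σ = -((H₁⁻¹)ᵀ * (β₁ᵀ * H₁ᵀ)) := by
    have h0 : H₁⁻¹ * (β₁.map σ)ᵀ * H₁ = -β₁ := by
      have h0' := hβ₁α
      simp only [alphaMap] at h0'
      exact neg_eq_iff_eq_neg.mp h0'
    have h1 : (β₁.map σ)ᵀ = -(H₁ * (β₁ * H₁⁻¹)) := by
      have h2 := congrArg (fun M => H₁ * (M * H₁⁻¹)) h0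
      simp only [Matrix.mul_assoc] at h2
      rw [canc _ _ h1r, h1r, Matrix.mul_one] at h2
      simpa [Matrix.mul_neg, Matrix.neg_mul] using h2
    have h3 := congrArg Matrix.transpose h1
    simpa [Matrix.transpose_mul, Matrix.mul_assoc] using h3
  have hb2σ : β₂.map σ = -((H₂⁻¹)ᵀ * (β₂ᵀ * H₂ᵀ)) := by
    have h0 : H₂⁻¹ * (β₂.map σ)ᵀ * H₂ = -β₂ := by
      have h0' := hβ₂α
      simp only [alphaMap] at h0'
      exact neg_eq_iff_eq_neg.mp h0'
    have h1 : (β₂.map σ)ᵀ = -(H₂ * (β₂ * H₂⁻¹)) := by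
      have h2 := congrArg (fun M => H₂ * (M * H₂⁻¹)) h0
      simp only [Matrix.mul_assoc] at h2
      rw [canc _ _ h2r, h2r, Matrix.mul_one] at h2
      simpa [Matrix.mul_neg, Matrix.neg_mul] using h2
    have h3 := congrArg Matrix.transpose h1
    simpa [Matrix.transpose_mul, Matrix.mul_assoc] using h3
  have hb1iσ : (β₁⁻¹).map σ = -((H₁⁻¹)ᵀ * ((β₁⁻¹)ᵀ * H₁ᵀ)) := by
    rw [mapInvAux σ β₁ hβ₁, hb1σ]
    refine Matrix.inv_eq_left_inv ?_
    rw [neg_mul_neg]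
    simp only [Matrix.mul_assoc]
    rw [tcanc _ _ h1l, tcanc _ _ hb1r, ← Matrix.transpose_mul, h1r, Matrix.transpose_one]
  have hneg : ∀ {p q : ℕ} (M : Matrix (Fin p) (Fin q) F), (-M).map σ = -(M.map σ) := by
    intro p q M; ext i j; simp
  have hsub : ∀ {p q : ℕ} (M N : Matrix (Fin p) (Fin q) F),
      (M - N).map σ = M.map σ - N.map σ := by
    intro p q M N; ext i j; simp
  have hσtr : σ (Matrix.trace ((X - β₁⁻¹ * X * β₂) * alphaMap σ H₁ H₂ X))
      = Matrix.trace (((X - β₁⁻¹ * X * β₂) * alphaMap σ H₁ H₂ X).map σ) := by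
    rw [AddMonoidHom.map_trace (σ : F →+* F) _]
  rw [hσtr]
  simp only [alphaMap, ← hS]
  rw [Matrix.map_mul, hsub, hneg, Matrix.map_mul, Matrix.map_mul, Matrix.map_mul, Matrix.map_mul,
    Matrix.transpose_map, hSS, hb1iσ, hb2σ, hH2iσ, hH1σ]
  simp only [Matrix.neg_mul, Matrix.mul_neg, neg_neg, Matrix.sub_mul, Matrix.smul_mul,
    Matrix.mul_smul, smul_smul, hε2, one_smul, Matrix.trace_sub, Matrix.trace_neg,
    Matrix.trace_smul]
  have T1 : (S * (H₂⁻¹ᵀ * Xᵀ * H₁ᵀ)).trace = (X * (H₂⁻¹ * Sᵀ * H₁)).trace := by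
    have e1 : S * (H₂⁻¹ᵀ * Xᵀ * H₁ᵀ) = (H₁ * (X * (H₂⁻¹ * Sᵀ)))ᵀ := by
      simp [Matrix.transpose_mul, Matrix.mul_assoc]
    rw [e1, Matrix.trace_transpose, Matrix.trace_mul_comm]
    simp only [Matrix.mul_assoc]
  have T2 : (H₁⁻¹ᵀ * (β₁⁻¹ᵀ * H₁ᵀ) * S * (H₂⁻¹ᵀ * (β₂ᵀ * H₂ᵀ)) * (H₂⁻¹ᵀ * Xᵀ * H₁ᵀ)).trace
      = (β₁⁻¹ * X * β₂ * (H₂⁻¹ * Sᵀ * H₁)).trace := by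
    have e2 : H₁⁻¹ᵀ * (β₁⁻¹ᵀ * H₁ᵀ) * S * (H₂⁻¹ᵀ * (β₂ᵀ * H₂ᵀ)) * (H₂⁻¹ᵀ * Xᵀ * H₁ᵀ)
        = (H₁ * (X * (β₂ * (H₂⁻¹ * (Sᵀ * (H₁ * (β₁⁻¹ * H₁⁻¹)))))))ᵀ := by
      simp only [Matrix.transpose_mul, Matrix.transpose_transpose, Matrix.mul_assoc]
      rw [tcanc _ _ h2l]
    rw [e2, Matrix.trace_transpose, Matrix.trace_mul_comm]
    simp only [Matrix.mul_assoc]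
    rw [h1l, Matrix.mul_one]
    rw [show X * (β₂ * (H₂⁻¹ * (Sᵀ * (H₁ * β₁⁻¹)))) = (X * (β₂ * (H₂⁻¹ * (Sᵀ * H₁)))) * β₁⁻¹
        from by simp only [Matrix.mul_assoc], Matrix.trace_mul_comm]
  rw [T1, T2]
end
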